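/- arXiv:2305.19095 — 7 statements merged into one kernel-verified Lean document; each statement's English description precedes it below -/
import Mathlib

section
/- Let 1 ≤ k ≤ n and let T ⊆ E be any subset with |T| = n+1−k. Then in the Chow ring A*(M) one has the equality Σ_F OI_E(F,T)·x_F = Σ_F (min(|F|,k) − k|F|/(n+1))·x_F = γ_k, where both sums run over the nonempty proper flats F of M. In particular the left-hand side does not depend on the choice of T. -/
/-!
Common setup: Chow rings of matroids, hypersimplex classes, degree functionals.
The ground set is a finite type `α`; for a matroid `M` on `α` the Chow ring
`A*(M)` is the quotient of the polynomial ring over `ℚ` on variables indexed by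
the nonempty proper flats of `M` by the ideal generated by products of
incomparable variables and the linear elements `∑_{F ∋ i} x_F - ∑_{F ∋ j} x_F`.
-/

open scoped Classical

set_option maxHeartbeats 1000000
set_option synthInstance.maxHeartbeats 1000000

noncomputable section

variable {α : Type*} [Fintype α] [DecidableEq α]

/-- The rank of a set in a matroid: the largest cardinality of an independent subset. -/
def mrank (M : Matroid α) (S : Set α) : ℕ :=
  sSup {m | ∃ I, M.Indep I ∧ I ⊆ S ∧ I.ncard = m}

/-- A matroid is loopless if every singleton of the ground set is independent. -/
def Loopless (M : Matroid α) : Prop := ∀ e ∈ M.E, M.Indep {e}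

/-- `F` is a nonempty proper flat of `M`. -/
def ProperFlat (M : Matroid α) (F : Finset α) : Prop :=
  M.IsFlat ↑F ∧ F.Nonempty ∧ (↑F : Set α) ≠ M.E

/-- The variables of the Chow ring: nonempty proper flats. -/
abbrev ChowVar (M : Matroid α) := {F : Finset α // ProperFlat M F}

noncomputable instance (M : Matroid α) : Fintype (ChowVar M) := Fintype.ofFinite _

/-- The defining ideal of the Chow ring of a matroid. -/
def chowIdeal (M : Matroid α) : Ideal (MvPolynomial (ChowVar M) ℚ) :=
  Ideal.span
    ({p | ∃ F G : ChowVar M, ¬ F.1 ⊆ G.1 ∧ ¬ G.1 ⊆ F.1 ∧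
        p = MvPolynomial.X F * MvPolynomial.X G} ∪
     {p | ∃ i ∈ M.E, ∃ j ∈ M.E,
        p = (∑ F : ChowVar M, if i ∈ F.1 then MvPolynomial.X F else 0)
          - (∑ F : ChowVar M, if j ∈ F.1 then MvPolynomial.X F else 0)})

/-- The Chow ring `A*(M)` of a matroid (with `ℚ`-coefficients). -/
abbrev ChowRing (M : Matroid α) := MvPolynomial (ChowVar M) ℚ ⧸ chowIdeal M

/-- The quotient map onto the Chow ring. -/
def chowMk (M : Matroid α) : MvPolynomial (ChowVar M) ℚ →ₐ[ℚ] ChowRing M :=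
  Ideal.Quotient.mkₐ ℚ (chowIdeal M)

/-- The canonical polynomial representative of the hypersimplex class `γ_k`:
`∑_F (min(|F|,k) - k·|F|/N) x_F` where `N` is the size of the ground set,
for `1 ≤ k ≤ N - 1`, and `0` otherwise. -/
def gammaPoly (M : Matroid α) (k : ℤ) : MvPolynomial (ChowVar M) ℚ :=
  if 1 ≤ k ∧ k ≤ (M.E.ncard : ℤ) - 1 then
    ∑ F : ChowVar M,
      (min (F.1.card : ℚ) (k : ℚ) - (k : ℚ) * (F.1.card : ℚ) / (M.E.ncard : ℚ))
        • MvPolynomial.X F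
  else 0

/-- The hypersimplex class `γ_k ∈ A*(M)`. -/
def gamma (M : Matroid α) (k : ℤ) : ChowRing M := chowMk M (gammaPoly M k)

/-- A degree functional for a matroid of rank `ρ + 1`: a `ℚ`-linear functional on the
Chow ring sending the class of every complete flag monomial `x_{F₁} ⋯ x_{F_ρ}` to `1`
and the class of every monomial of degree `≠ ρ` to `0`. -/
structure IsDegreeFunctional (M : Matroid α) (ρ : ℕ) (deg : ChowRing M →ₗ[ℚ] ℚ) : Prop where
  flag : ∀ Fl : Fin ρ → ChowVar M, (∀ i j : Fin ρ, i < j → (Fl i).1 ⊂ (Fl j).1) →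
    deg (chowMk M (∏ i, MvPolynomial.X (Fl i))) = 1
  ne_deg : ∀ m : ChowVar M →₀ ℕ, (m.sum fun _ e => e) ≠ ρ →
    deg (chowMk M (MvPolynomial.monomial m (1 : ℚ))) = 0

end

noncomputable section

/-- The over-intersection `OI_U(S,T) = |S ∩ T| - max(0, |S| + |T| - |U|)`,
where `U` has `N` elements. -/
def OI (N : ℕ) {α : Type*} [DecidableEq α] (S T : Finset α) : ℤ :=
  ((S ∩ T).card : ℤ) - max 0 ((S.card : ℤ) + (T.card : ℤ) - (N : ℤ))

/-- For `1 ≤ k ≤ n` and any `T ⊆ E` with `|T| = n + 1 - k`, one has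
`∑_F OI_E(F,T)·x_F = ∑_F (min(|F|,k) - k|F|/(n+1))·x_F = γ_k` in `A*(M)`; in
particular the first sum does not depend on the choice of `T`. -/
theorem stmt0 {n r : ℕ} (M : Matroid (Fin (n + 1))) (hE : M.E = Set.univ)
    (hM : Loopless M) (hrk : mrank M M.E = r + 1)
    (k : ℕ) (hk1 : 1 ≤ k) (hkn : k ≤ n)
    (T : Finset (Fin (n + 1))) (hT : T.card = n + 1 - k) :
    chowMk M (∑ F : ChowVar M, ((OI (n + 1) F.1 T : ℚ)) • MvPolynomial.X F) =
      chowMk M (∑ F : ChowVar M,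
        (min (F.1.card : ℚ) (k : ℚ) - (k : ℚ) * (F.1.card : ℚ) / ((n : ℚ) + 1))
          • MvPolynomial.X F) ∧
    chowMk M (∑ F : ChowVar M,
        (min (F.1.card : ℚ) (k : ℚ) - (k : ℚ) * (F.1.card : ℚ) / ((n : ℚ) + 1))
          • MvPolynomial.X F) = gamma M k := by
  classical
  have hcardE : M.E.ncard = n + 1 := by
    rw [hE, Set.ncard_univ]; simp
  have hn1 : ((n : ℚ) + 1) ≠ 0 := by positivity
  have hkle : k ≤ n + 1 := by omega
  have hTQ : (T.card : ℚ) = (n : ℚ) + 1 - k := by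
    rw [hT]; simp [Nat.cast_sub hkle]
  have hTZ : (T.card : ℤ) = (n : ℤ) + 1 - k := by
    rw [hT]; simp [Int.ofNat_sub hkle]
  set lam : Fin (n + 1) → ℚ :=
    fun i => (if i ∈ T then (1 : ℚ) else 0) - 1 + (k : ℚ) / ((n : ℚ) + 1) with hlam
  have hsumlam : ∑ i : Fin (n + 1), lam i = 0 := by
    simp only [hlam, Finset.sum_add_distrib, Finset.sum_sub_distrib,
      Finset.sum_ite_mem, Finset.univ_inter, Finset.sum_const, Finset.card_univ,
      Fintype.card_fin, nsmul_eq_mul, mul_one, Nat.cast_add, Nat.cast_one]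
    rw [hTQ]; field_simp; ring
  set L : Fin (n + 1) → MvPolynomial (ChowVar M) ℚ :=
    fun i => ∑ F : ChowVar M, if i ∈ F.1 then MvPolynomial.X F else 0 with hL
  have hLmem : ∀ i : Fin (n + 1), L i - L 0 ∈ chowIdeal M := by
    intro i
    refine Ideal.subset_span (Or.inr ⟨i, ?_, 0, ?_, rfl⟩) <;> simp [hE]
  -- the per-flat coefficient identity
  have hcoef : ∀ F : ChowVar M,
      ((OI (n + 1) F.1 T : ℚ))
        - (min (F.1.card : ℚ) (k : ℚ) - (k : ℚ) * (F.1.card : ℚ) / ((n : ℚ) + 1))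
      = ∑ i ∈ F.1, lam i := by
    intro F
    have hrhs : ∑ i ∈ F.1, lam i
        = ((F.1 ∩ T).card : ℚ) - F.1.card + (F.1.card : ℚ) * ((k : ℚ) / ((n : ℚ) + 1)) := by
      simp only [hlam, Finset.sum_add_distrib, Finset.sum_sub_distrib,
        Finset.sum_ite_mem, Finset.sum_const, nsmul_eq_mul, mul_one]
    rw [hrhs]
    unfold OI
    push_cast
    rcases le_total (F.1.card : ℚ) (k : ℚ) with h | h
    · rw [min_eq_left h, max_eq_left (by rw [hTQ]; linarith)]
      field_simp
      ring
    · rw [min_eq_right h, max_eq_right (by rw [hTQ]; linarith), hTQ]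
      field_simp
      ring
  -- the difference of the two polynomials
  have hdiff :
      (∑ F : ChowVar M, ((OI (n + 1) F.1 T : ℚ)) • MvPolynomial.X F)
        - (∑ F : ChowVar M,
            (min (F.1.card : ℚ) (k : ℚ) - (k : ℚ) * (F.1.card : ℚ) / ((n : ℚ) + 1))
              • MvPolynomial.X F)
      = ∑ i : Fin (n + 1), lam i • (L i - L 0) := by
    have hR : ∑ i : Fin (n + 1), lam i • (L i - L 0)
        = ∑ i : Fin (n + 1), lam i • L i := by
      simp only [smul_sub, Finset.sum_sub_distrib, ← Finset.sum_smul, hsumlam,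
        zero_smul, sub_zero]
    rw [hR, ← Finset.sum_sub_distrib]
    have hLi : ∀ i : Fin (n + 1), lam i • L i
        = ∑ F : ChowVar M, if i ∈ F.1 then lam i • MvPolynomial.X F else 0 := by
      intro i
      rw [hL]
      rw [Finset.smul_sum]
      refine Finset.sum_congr rfl fun F _ => ?_
      split <;> simp
    simp only [hLi]
    rw [Finset.sum_comm]
    refine Finset.sum_congr rfl fun F _ => ?_
    rw [← sub_smul, hcoef F, Finset.sum_ite_mem, Finset.univ_inter, Finset.sum_smul]
  have hmem :
      (∑ F : ChowVar M, ((OI (n + 1) F.1 T : ℚ)) • MvPolynomial.X F)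
        - (∑ F : ChowVar M,
            (min (F.1.card : ℚ) (k : ℚ) - (k : ℚ) * (F.1.card : ℚ) / ((n : ℚ) + 1))
              • MvPolynomial.X F) ∈ chowIdeal M := by
    rw [hdiff]
    refine Ideal.sum_mem _ fun i _ => ?_
    rw [MvPolynomial.smul_eq_C_mul]
    exact Ideal.mul_mem_left _ _ (hLmem i)
  constructor
  · show Ideal.Quotient.mkₐ ℚ (chowIdeal M) _ = Ideal.Quotient.mkₐ ℚ (chowIdeal M) _
    simp only [Ideal.Quotient.mkₐ_eq_mk]
    exact Ideal.Quotient.eq.mpr hmem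
  · rw [gamma, gammaPoly]
    rw [if_pos]
    · congr 1
      refine Finset.sum_congr rfl fun F _ => ?_
      rw [hcardE]
      push_cast
      ring_nf
    · constructor
      · exact_mod_cast hk1
      · rw [hcardE]; push_cast; omega

end
end

section
/- If F is a nonempty proper flat of M with |F| = k, then x_F·γ_k = 0 in the Chow ring A*(M). -/
/-!
Common setup: Chow rings of matroids, hypersimplex classes, degree functionals.
The ground set is a finite type `α`; for a matroid `M` on `α` the Chow ring
`A*(M)` is the quotient of the polynomial ring over `ℚ` on variables indexed by
the nonempty proper flats of `M` by the ideal generated by products of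
incomparable variables and the linear elements `∑_{F ∋ i} x_F - ∑_{F ∋ j} x_F`.
-/

open scoped Classical

set_option maxHeartbeats 1000000
set_option synthInstance.maxHeartbeats 1000000

noncomputable section

/-- If `F` is a nonempty proper flat with `|F| = k`, then
`x_F · γ_k = 0` in `A*(M)`. -/
theorem stmt3 {n r : ℕ} (M : Matroid (Fin (n + 1))) (hE : M.E = Set.univ)
    (hM : Loopless M) (hrk : mrank M M.E = r + 1)
    (k : ℕ) (F : ChowVar M) (hF : F.1.card = k) :
    chowMk M (MvPolynomial.X F) * gamma M k = 0 := by
  classical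
  obtain ⟨hFlat, hFne, hFprop⟩ := F.2
  -- basic numerology
  have hNcard : M.E.ncard = n + 1 := by
    rw [hE, Set.ncard_univ, Nat.card_eq_fintype_card, Fintype.card_fin]
  have hk1 : 1 ≤ k := by
    rw [← hF]; exact Finset.card_pos.mpr hFne
  have hFneuniv : F.1 ≠ Finset.univ := by
    intro h
    apply hFprop
    rw [h, hE]; simp
  have hkn : k ≤ n := by
    have h1 : F.1.card < n + 1 := by
      have := Finset.card_le_univ F.1
      rcases lt_or_eq_of_le this with h | h
      · simpa using h
      · exact absurd (Finset.eq_univ_of_card F.1 (by simpa using h)) hFneuniv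
    omega
  set q := chowMk M with hq
  -- incomparable products vanish
  have hzero : ∀ G : ChowVar M, ¬ F.1 ⊆ G.1 → ¬ G.1 ⊆ F.1 →
      q (MvPolynomial.X F) * q (MvPolynomial.X G) = 0 := by
    intro G h1 h2
    have hmem : (MvPolynomial.X F * MvPolynomial.X G : MvPolynomial (ChowVar M) ℚ)
        ∈ chowIdeal M :=
      Ideal.subset_span (Or.inl ⟨F, G, h1, h2, rfl⟩)
    have h0 := (Ideal.Quotient.eq_zero_iff_mem (I := chowIdeal M)).mpr hmem
    rw [← map_mul]
    simpa [q, chowMk, Ideal.Quotient.mkₐ_eq_mk] using h0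
  -- linear relations
  have hlin : ∀ i j : Fin (n + 1),
      q (∑ G : ChowVar M, if i ∈ G.1 then MvPolynomial.X G else 0)
        = q (∑ G : ChowVar M, if j ∈ G.1 then MvPolynomial.X G else 0) := by
    intro i j
    have hmem : ((∑ G : ChowVar M, if i ∈ G.1 then MvPolynomial.X G else 0)
        - (∑ G : ChowVar M, if j ∈ G.1 then MvPolynomial.X G else 0)) ∈ chowIdeal M :=
      Ideal.subset_span (Or.inr ⟨i, by rw [hE]; trivial, j, by rw [hE]; trivial, rfl⟩)
    have h0 := (Ideal.Quotient.eq_zero_iff_mem (I := chowIdeal M)).mpr hmem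
    have h1 : q ((∑ G : ChowVar M, if i ∈ G.1 then MvPolynomial.X G else 0)
        - (∑ G : ChowVar M, if j ∈ G.1 then MvPolynomial.X G else 0)) = 0 := by
      simpa [q, chowMk, Ideal.Quotient.mkₐ_eq_mk] using h0
    rw [map_sub] at h1
    exact sub_eq_zero.mp h1
  obtain ⟨i₀, hi₀⟩ := hFne
  set L : ChowRing M := q (∑ G : ChowVar M, if i₀ ∈ G.1 then MvPolynomial.X G else 0)
    with hL
  set t : ChowVar M → ChowRing M :=
    fun G => q (MvPolynomial.X F) * q (MvPolynomial.X G) with ht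
  -- the key inner sum identity
  have hinner : ∀ i : Fin (n + 1),
      (∑ G : ChowVar M, (if i ∈ G.1 then (1 : ℚ) else 0) • t G)
        = q (MvPolynomial.X F) * L := by
    intro i
    have : (∑ G : ChowVar M, (if i ∈ G.1 then (1 : ℚ) else 0) • t G)
        = ∑ G : ChowVar M, (q (MvPolynomial.X F) *
            (if i ∈ G.1 then q (MvPolynomial.X G) else 0)) := by
      refine Finset.sum_congr rfl fun G _ => ?_
      by_cases h : i ∈ G.1 <;> simp [h, t]
    rw [this, ← Finset.mul_sum, hL, hlin i₀ i, map_sum]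
    congr 1
    refine Finset.sum_congr rfl fun G _ => ?_
    by_cases h : i ∈ G.1 <;> simp [h]
  -- unfold gamma
  have hcond : (1 ≤ (k : ℤ) ∧ (k : ℤ) ≤ ((M.E.ncard : ℤ)) - 1) := by
    constructor
    · exact_mod_cast hk1
    · rw [hNcard]; push_cast; omega
  have hgamma : gamma M k = ∑ G : ChowVar M,
      (min (G.1.card : ℚ) (k : ℚ) - (k : ℚ) * (G.1.card : ℚ) / (M.E.ncard : ℚ)) • q (MvPolynomial.X G) := by
    rw [gamma, gammaPoly, if_pos hcond, map_sum]
    refine Finset.sum_congr rfl fun G _ => ?_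
    rw [map_smul]
    push_cast
    rfl
  have hmain : q (MvPolynomial.X F) * gamma M k
      = ∑ G : ChowVar M,
          (min (G.1.card : ℚ) (k : ℚ) - (k : ℚ) * (G.1.card : ℚ) / (M.E.ncard : ℚ)) • t G := by
    rw [hgamma, Finset.mul_sum]
    refine Finset.sum_congr rfl fun G _ => ?_
    rw [mul_smul_comm]
  -- replace min by intersection cardinality
  have hrepl : (∑ G : ChowVar M,
        (min (G.1.card : ℚ) (k : ℚ) - (k : ℚ) * (G.1.card : ℚ) / (M.E.ncard : ℚ)) • t G)
      = ∑ G : ChowVar M,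
        (((F.1 ∩ G.1).card : ℚ) - (k : ℚ) * (G.1.card : ℚ) / (M.E.ncard : ℚ)) • t G := by
    refine Finset.sum_congr rfl fun G _ => ?_
    by_cases h1 : F.1 ⊆ G.1
    · have hGF : F.1 ∩ G.1 = F.1 := Finset.inter_eq_left.mpr h1
      have hle : (k : ℚ) ≤ (G.1.card : ℚ) := by
        have := Finset.card_le_card h1
        rw [hF] at this
        exact_mod_cast this
      rw [hGF, hF, min_eq_right hle]
    · by_cases h2 : G.1 ⊆ F.1
      · have hGF : F.1 ∩ G.1 = G.1 := Finset.inter_eq_right.mpr h2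
        have hle : (G.1.card : ℚ) ≤ (k : ℚ) := by
          have := Finset.card_le_card h2
          rw [hF] at this
          exact_mod_cast this
        rw [hGF, min_eq_left hle]
      · have h0 : t G = 0 := hzero G h1 h2
        rw [h0, smul_zero, smul_zero]
  -- first sum: intersection cardinalities
  have hsum1 : (∑ G : ChowVar M, ((F.1 ∩ G.1).card : ℚ) • t G)
      = (k : ℚ) • (q (MvPolynomial.X F) * L) := by
    have hcard : ∀ G : ChowVar M, ((F.1 ∩ G.1).card : ℚ)
        = ∑ i ∈ F.1, (if i ∈ G.1 then (1 : ℚ) else 0) := by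
      intro G
      rw [Finset.sum_boole, Finset.filter_mem_eq_inter]
    calc (∑ G : ChowVar M, ((F.1 ∩ G.1).card : ℚ) • t G)
        = ∑ G : ChowVar M, ∑ i ∈ F.1, (if i ∈ G.1 then (1 : ℚ) else 0) • t G := by
          refine Finset.sum_congr rfl fun G _ => ?_
          rw [hcard G, Finset.sum_smul]
      _ = ∑ i ∈ F.1, ∑ G : ChowVar M, (if i ∈ G.1 then (1 : ℚ) else 0) • t G :=
          Finset.sum_comm
      _ = ∑ i ∈ F.1, q (MvPolynomial.X F) * L := by
          refine Finset.sum_congr rfl fun i _ => hinner i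
      _ = (F.1.card : ℚ) • (q (MvPolynomial.X F) * L) := by
          rw [Finset.sum_const, ← Nat.cast_smul_eq_nsmul ℚ]
      _ = (k : ℚ) • (q (MvPolynomial.X F) * L) := by rw [hF]
  -- second sum: full cardinalities
  have hsum2 : (∑ G : ChowVar M, (G.1.card : ℚ) • t G)
      = ((n : ℚ) + 1) • (q (MvPolynomial.X F) * L) := by
    have hcard : ∀ G : ChowVar M, ((G.1.card : ℚ))
        = ∑ i : Fin (n + 1), (if i ∈ G.1 then (1 : ℚ) else 0) := by
      intro G
      rw [Finset.sum_boole]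
      simp
    calc (∑ G : ChowVar M, (G.1.card : ℚ) • t G)
        = ∑ G : ChowVar M, ∑ i : Fin (n + 1), (if i ∈ G.1 then (1 : ℚ) else 0) • t G := by
          refine Finset.sum_congr rfl fun G _ => ?_
          rw [hcard G, Finset.sum_smul]
      _ = ∑ i : Fin (n + 1), ∑ G : ChowVar M, (if i ∈ G.1 then (1 : ℚ) else 0) • t G :=
          Finset.sum_comm
      _ = ∑ _i : Fin (n + 1), q (MvPolynomial.X F) * L := by
          refine Finset.sum_congr rfl fun i _ => hinner i
      _ = ((n : ℚ) + 1) • (q (MvPolynomial.X F) * L) := by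
          rw [Finset.sum_const, ← Nat.cast_smul_eq_nsmul ℚ]
          simp
  -- put it together
  rw [hmain, hrepl]
  have hsplit : (∑ G : ChowVar M,
      (((F.1 ∩ G.1).card : ℚ) - (k : ℚ) * (G.1.card : ℚ) / (M.E.ncard : ℚ)) • t G)
      = (∑ G : ChowVar M, ((F.1 ∩ G.1).card : ℚ) • t G)
        - ((k : ℚ) / (M.E.ncard : ℚ)) • (∑ G : ChowVar M, (G.1.card : ℚ) • t G) := by
    rw [Finset.smul_sum, ← Finset.sum_sub_distrib]
    refine Finset.sum_congr rfl fun G _ => ?_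
    rw [sub_smul, smul_smul]
    congr 2
    ring
  rw [hsplit, hsum1, hsum2, smul_smul, hNcard]
  have hne : ((n : ℚ) + 1) ≠ 0 := by positivity
  have : (k : ℚ) / ((n + 1 : ℕ) : ℚ) * ((n : ℚ) + 1) = (k : ℚ) := by
    push_cast
    field_simp
  rw [this, sub_self]

end
end

section
/- For every integer ℓ with 1 ≤ ℓ ≤ n, the following two identities hold in A*(M): (1) γ_ℓ = θ̃_i(Γ_{ℓ−1}^{M∖i}) + Σ_S x_S, where the sum runs over nonempty proper flats S of M with i ∉ S and |S| ≥ ℓ; (2) γ_ℓ = θ̃_i(Γ_ℓ^{M∖i}) + Σ_S x_S, where the sum runs over nonempty proper flats S of M with i ∈ S and |S| ≤ ℓ. -/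
/-!
Common setup: Chow rings of matroids, hypersimplex classes, degree functionals.
The ground set is a finite type `α`; for a matroid `M` on `α` the Chow ring
`A*(M)` is the quotient of the polynomial ring over `ℚ` on variables indexed by
the nonempty proper flats of `M` by the ideal generated by products of
incomparable variables and the linear elements `∑_{F ∋ i} x_F - ∑_{F ∋ j} x_F`.
-/

open scoped Classical

set_option maxHeartbeats 1000000
set_option synthInstance.maxHeartbeats 1000000

noncomputable section

/-- The class of `x_S` in `A*(M)`, interpreted as `0` when `S` is not a nonempty
proper flat of `M`. -/
def xcl {α : Type*} [Fintype α] [DecidableEq α] (M : Matroid α) (S : Finset α) :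
    ChowRing M :=
  if h : ProperFlat M S then chowMk M (MvPolynomial.X (⟨S, h⟩ : ChowVar M)) else 0

/-- The pullback `θ̃_i`: the `ℚ`-algebra homomorphism from the polynomial ring on the
nonempty proper flats of the deletion `M∖i = M.restrict (M.E \ {i})` to `A*(M)` sending
`x_G` to the class of `x_G + x_{G ∪ {i}}` (variables indexed by non-flats of `M`
being interpreted as `0`). -/
def thetaTilde {α : Type*} [Fintype α] [DecidableEq α] (M : Matroid α) (i : α) :
    MvPolynomial (ChowVar (M.restrict (M.E \ {i}))) ℚ →ₐ[ℚ] ChowRing M :=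
  MvPolynomial.aeval fun G : ChowVar (M.restrict (M.E \ {i})) =>
    xcl M G.1 + xcl M (insert i G.1)

section Helpers

variable {α : Type*} [Fintype α] [DecidableEq α]

lemma xcl_coe (M : Matroid α) (F : ChowVar M) : xcl M F.1 = chowMk M (MvPolynomial.X F) := by
  rw [xcl, dif_pos F.2]

lemma xcl_zero (M : Matroid α) {S : Finset α} (h : ¬ ProperFlat M S) : xcl M S = 0 := dif_neg h

lemma sum_chowvar {β : Type*} [AddCommMonoid β] (M : Matroid α) (g : Finset α → β)
    (hg : ∀ S, ¬ ProperFlat M S → g S = 0) :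
    ∑ F : ChowVar M, g F.1 = ∑ S : Finset α, g S := by
  rw [← Finset.sum_subtype (Finset.univ.filter fun S : Finset α => ProperFlat M S)
      (fun x => by simp) g]
  exact Finset.sum_filter_of_ne fun S _ hne => by_contra fun hc => hne (hg S hc)

lemma properFlat_card_lt (M : Matroid α) {S : Finset α} (h : ProperFlat M S) :
    S.card < M.E.ncard := by
  have h1 : (↑S : Set α) ⊂ M.E := Set.ssubset_iff_subset_ne.mpr ⟨h.1.subset_ground, h.2.2⟩
  have h2 := Set.ncard_lt_ncard h1 (Set.toFinite M.E)
  simpa using h2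

lemma flat_restrict_aux (M : Matroid α) {R F S : Set α} (hR : R ⊆ M.E) (hS : M.IsFlat S)
    (hFR : F ⊆ R) (hSF : S ∩ R ⊆ F) (hFS : F ⊆ S) : (M.restrict R).IsFlat F := by
  constructor
  · intro I X hIF hIX
    rw [Matroid.isBasis_restrict_iff hR] at hIF hIX
    have h1 : X ⊆ M.closure I := hIX.1.subset_closure
    have h2 : M.closure I ⊆ S := by
      calc M.closure I ⊆ M.closure S := M.closure_subset_closure (hIF.1.subset.trans hFS)
        _ = S := hS.closure
    exact fun x hx => hSF ⟨h2 (h1 hx), hIX.2 hx⟩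
  · rw [Matroid.restrict_ground_eq]; exact hFR

lemma sum_smul_add {β : Type*} [AddCommMonoid β] [Module ℚ β] (f g : Finset α → ℚ)
    (x : Finset α → β) :
    (∑ S : Finset α, f S • x S) + ∑ S : Finset α, g S • x S
      = ∑ S : Finset α, (f S + g S) • x S := by
  rw [← Finset.sum_add_distrib]
  exact Finset.sum_congr rfl fun S _ => (add_smul _ _ _).symm

lemma sum_insert_reindex {β : Type*} [AddCommMonoid β] (i : α) (P : Finset α → Prop)
    (hP : ∀ S, P S → i ∉ S) (f : Finset α → Finset α → β) :
    ∑ S : Finset α, (if P S then f S (insert i S) else 0)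
      = ∑ T : Finset α, (if i ∈ T ∧ P (T.erase i) then f (T.erase i) T else 0) := by
  rw [← Finset.sum_filter, ← Finset.sum_filter]
  refine Finset.sum_nbij' (insert i) (fun T => T.erase i) ?_ ?_ ?_ ?_ ?_
  · intro S hS
    simp only [Finset.mem_filter, Finset.mem_univ, true_and] at hS ⊢
    exact ⟨Finset.mem_insert_self i S, by rw [Finset.erase_insert (hP S hS)]; exact hS⟩
  · intro T hT
    simp only [Finset.mem_filter, Finset.mem_univ, true_and] at hT ⊢
    exact hT.2
  · intro S hS
    simp only [Finset.mem_filter, Finset.mem_univ, true_and] at hS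
    exact Finset.erase_insert (hP S hS)
  · intro T hT
    simp only [Finset.mem_filter, Finset.mem_univ, true_and] at hT
    exact Finset.insert_erase hT.1
  · intro S hS
    simp only [Finset.mem_filter, Finset.mem_univ, true_and] at hS
    rw [Finset.erase_insert (hP S hS)]

lemma chow_L (M : Matroid α) (j : α) :
    chowMk M (∑ F : ChowVar M, if j ∈ F.1 then MvPolynomial.X F else 0)
      = ∑ S : Finset α, (if j ∈ S then (1:ℚ) else 0) • xcl M S := by
  rw [map_sum,
    ← sum_chowvar M (fun S => (if j ∈ S then (1:ℚ) else 0) • xcl M S)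
      (fun S hS => by simp only [xcl_zero M hS, smul_zero])]
  refine Finset.sum_congr rfl fun F _ => ?_
  rw [xcl_coe, apply_ite (chowMk M), map_zero, ite_smul, one_smul, zero_smul]

lemma chow_rel (M : Matroid α) {i j : α} (hi : i ∈ M.E) (hj : j ∈ M.E) :
    ∑ S : Finset α, (if i ∈ S then (1:ℚ) else 0) • xcl M S
      = ∑ S : Finset α, (if j ∈ S then (1:ℚ) else 0) • xcl M S := by
  have hmem : ((∑ F : ChowVar M, if i ∈ F.1 then MvPolynomial.X F else 0)
      - (∑ F : ChowVar M, if j ∈ F.1 then MvPolynomial.X F else 0)) ∈ chowIdeal M :=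
    Ideal.subset_span (Or.inr ⟨i, hi, j, hj, rfl⟩)
  have h0 : chowMk M ((∑ F : ChowVar M, if i ∈ F.1 then MvPolynomial.X F else 0)
      - (∑ F : ChowVar M, if j ∈ F.1 then MvPolynomial.X F else 0)) = 0 := by
    rw [chowMk, Ideal.Quotient.mkₐ_eq_mk]
    exact Ideal.Quotient.eq_zero_iff_mem.mpr hmem
  rw [map_sub, sub_eq_zero, chow_L, chow_L] at h0
  exact h0

lemma gammaPoly_rep (M : Matroid α) (k : ℤ) (hk0 : 0 ≤ k) (hk : k ≤ (M.E.ncard : ℤ)) :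
    gammaPoly M k = ∑ F : ChowVar M,
      (min (F.1.card : ℚ) (k : ℚ) - (k : ℚ) * (F.1.card : ℚ) / (M.E.ncard : ℚ))
        • MvPolynomial.X F := by
  rw [gammaPoly]
  split_ifs with h
  · rfl
  · symm
    refine Finset.sum_eq_zero fun F _ => ?_
    have hcard := properFlat_card_lt M F.2
    rcases not_and_or.mp h with h1 | h2
    · have hk0' : k = 0 := by omega
      subst hk0'
      have hmin : min ((F.1.card : ℚ)) ((0:ℤ):ℚ) = 0 := by
        rw [Int.cast_zero]
        exact min_eq_right (by positivity)
      rw [hmin]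
      simp
    · have hkN : k = (M.E.ncard : ℤ) := by omega
      subst hkN
      have hlt : (F.1.card : ℚ) < ((M.E.ncard : ℤ) : ℚ) := by exact_mod_cast hcard
      have hN0 : ((M.E.ncard : ℤ) : ℚ) ≠ 0 := by
        have : (0:ℚ) ≤ (F.1.card : ℚ) := by positivity
        linarith
      rw [min_eq_left hlt.le]
      rw [show ((M.E.ncard : ℤ) : ℚ) * (F.1.card : ℚ) / (M.E.ncard : ℚ) = (F.1.card : ℚ) by
        push_cast at hN0 ⊢
        field_simp]
      rw [sub_self, zero_smul]

lemma chow_master (M : Matroid α) (hE : M.E = Set.univ) (i : α)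
    (w₁ w₂ : Finset α → ℚ) (τ : ℚ)
    (hkey : ∀ S : Finset α, ProperFlat M S →
      w₁ S + τ * S.card = w₂ S + τ * (Fintype.card α) * (if i ∈ S then 1 else 0)) :
    ∑ S : Finset α, w₁ S • xcl M S = ∑ S : Finset α, w₂ S • xcl M S := by
  have hstep : ∑ S : Finset α, (w₁ S + τ * S.card) • xcl M S
      = ∑ S : Finset α, (w₂ S + τ * (Fintype.card α) * (if i ∈ S then 1 else 0)) • xcl M S := by
    refine Finset.sum_congr rfl fun S _ => ?_
    by_cases h : ProperFlat M S
    · rw [hkey S h]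
    · rw [xcl_zero M h, smul_zero, smul_zero]
  have hdiff : ∑ S : Finset α, (τ * S.card) • xcl M S
      = ∑ S : Finset α, (τ * (Fintype.card α) * (if i ∈ S then 1 else 0)) • xcl M S := by
    have hL : ∀ S : Finset α, (τ * (S.card:ℚ)) • xcl M S
        = ∑ j : α, (if j ∈ S then τ else 0) • xcl M S := by
      intro S
      rw [← Finset.sum_smul]
      congr 1
      rw [Fintype.sum_ite_mem, Finset.sum_const, nsmul_eq_mul, mul_comm]
    have hmid : ∀ j : α, ∑ S : Finset α, (if j ∈ S then τ else 0) • xcl M S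
        = τ • ∑ S : Finset α, (if i ∈ S then (1:ℚ) else 0) • xcl M S := by
      intro j
      have h := chow_rel M (i := j) (j := i) (by rw [hE]; trivial) (by rw [hE]; trivial)
      rw [← h, Finset.smul_sum]
      refine Finset.sum_congr rfl fun S _ => ?_
      rw [smul_smul]
      congr 1
      split_ifs <;> ring
    calc ∑ S : Finset α, (τ * S.card) • xcl M S
        = ∑ S : Finset α, ∑ j : α, (if j ∈ S then τ else 0) • xcl M S :=
          Finset.sum_congr rfl fun S _ => hL S
      _ = ∑ j : α, ∑ S : Finset α, (if j ∈ S then τ else 0) • xcl M S := Finset.sum_comm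
      _ = ∑ _j : α, τ • ∑ S : Finset α, (if i ∈ S then (1:ℚ) else 0) • xcl M S :=
          Finset.sum_congr rfl fun j _ => hmid j
      _ = (Fintype.card α) • (τ • ∑ S : Finset α, (if i ∈ S then (1:ℚ) else 0) • xcl M S) := by
          rw [Finset.sum_const, Finset.card_univ]
      _ = ∑ S : Finset α, (τ * (Fintype.card α) * (if i ∈ S then 1 else 0)) • xcl M S := by
          rw [← Nat.cast_smul_eq_nsmul ℚ, smul_smul, Finset.smul_sum]
          refine Finset.sum_congr rfl fun S _ => ?_
          rw [smul_smul]
          congr 1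
          split_ifs <;> ring
  have happ : (∑ S : Finset α, w₂ S • xcl M S) + ∑ S : Finset α, (τ * S.card) • xcl M S
      = ∑ S : Finset α, (w₂ S + τ * (Fintype.card α) * (if i ∈ S then 1 else 0)) • xcl M S := by
    rw [hdiff]
    exact sum_smul_add _ _ _
  have hfin := (sum_smul_add w₁ (fun S => τ * S.card) (xcl M)).trans (hstep.trans happ.symm)
  exact add_right_cancel hfin

end Helpers

/-- For `1 ≤ ℓ ≤ n`:
(1) `γ_ℓ = θ̃_i(Γ_{ℓ-1}^{M∖i}) + ∑_{S : i ∉ S, |S| ≥ ℓ} x_S`, and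
(2) `γ_ℓ = θ̃_i(Γ_ℓ^{M∖i}) + ∑_{S : i ∈ S, |S| ≤ ℓ} x_S`,
where the sums run over nonempty proper flats `S` of `M`. -/
theorem stmt4 {n r : ℕ} (M : Matroid (Fin (n + 1))) (hE : M.E = Set.univ)
    (hM : Loopless M) (hrk : mrank M M.E = r + 1) (i : Fin (n + 1))
    (l : ℕ) (hl1 : 1 ≤ l) (hln : l ≤ n) :
    gamma M l = thetaTilde M i (gammaPoly (M.restrict (M.E \ {i})) ((l : ℤ) - 1)) +
        ∑ S ∈ Finset.univ.filter (fun S : ChowVar M => i ∉ S.1 ∧ l ≤ S.1.card),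
          chowMk M (MvPolynomial.X S) ∧
    gamma M l = thetaTilde M i (gammaPoly (M.restrict (M.E \ {i})) (l : ℤ)) +
        ∑ S ∈ Finset.univ.filter (fun S : ChowVar M => i ∈ S.1 ∧ S.1.card ≤ l),
          chowMk M (MvPolynomial.X S) := by
  classical
  set M' := M.restrict (M.E \ {i}) with hM'def
  have hn1 : 1 ≤ n := hl1.trans hln
  have hEn : M.E.ncard = n + 1 := by
    rw [hE, Set.ncard_univ, Nat.card_eq_fintype_card, Fintype.card_fin]
  have hE' : M'.E = Set.univ \ {i} := by
    rw [hM'def, Matroid.restrict_ground_eq, hE]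
  have hn' : M'.E.ncard = n := by
    rw [hE', Set.ncard_diff (Set.subset_univ _), Set.ncard_univ, Set.ncard_singleton,
      Nat.card_eq_fintype_card, Fintype.card_fin]
    omega
  have hPFmem : ∀ S : Finset (Fin (n+1)), ProperFlat M' S → i ∉ S := by
    intro S h hiS
    have hsub := h.1.subset_ground
    rw [hE'] at hsub
    exact (hsub (Finset.mem_coe.mpr hiS)).2 rfl
  have hcard_le : ∀ S : Finset (Fin (n+1)), ProperFlat M S → S.card ≤ n := by
    intro S h
    have h2 := properFlat_card_lt M h
    rw [hEn] at h2
    omega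
  have hflat1 : ∀ S : Finset (Fin (n+1)), ProperFlat M S → i ∉ S →
      (ProperFlat M' S ↔ S.card < n) := by
    intro S hS hiS
    constructor
    · intro h
      have h2 := properFlat_card_lt M' h
      rwa [hn'] at h2
    · intro hlt
      refine ⟨?_, hS.2.1, ?_⟩
      · rw [hM'def]
        refine flat_restrict_aux M Set.diff_subset hS.1 ?_ Set.inter_subset_left subset_rfl
        intro x hx
        refine ⟨hS.1.subset_ground hx, ?_⟩
        intro hxi
        rw [Set.mem_singleton_iff] at hxi
        subst hxi
        exact hiS (Finset.mem_coe.mp hx)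
      · intro hcon
        have hc2 : S.card = M'.E.ncard := by
          rw [← hcon]
          exact (Set.ncard_coe_finset _).symm
        rw [hn'] at hc2
        omega
  have hflat2 : ∀ S : Finset (Fin (n+1)), ProperFlat M S → i ∈ S →
      (ProperFlat M' (S.erase i) ↔ 2 ≤ S.card) := by
    intro S hS hiS
    constructor
    · intro h
      have h1 := Finset.card_pos.mpr h.2.1
      rw [Finset.card_erase_of_mem hiS] at h1
      omega
    · intro h2
      refine ⟨?_, ?_, ?_⟩
      · rw [hM'def, Finset.coe_erase]
        refine flat_restrict_aux M Set.diff_subset hS.1 ?_ ?_ Set.diff_subset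
        · exact Set.diff_subset_diff_left hS.1.subset_ground
        · intro x hx
          exact ⟨hx.1, hx.2.2⟩
      · rw [← Finset.card_pos, Finset.card_erase_of_mem hiS]
        omega
      · intro hcon
        have hc2 : (S.erase i).card = M'.E.ncard := by
          rw [← hcon]
          exact (Set.ncard_coe_finset _).symm
        rw [hn', Finset.card_erase_of_mem hiS] at hc2
        have := hcard_le S hS
        omega
  have hA : gamma M (l:ℤ) = ∑ S : Finset (Fin (n+1)),
      (min (S.card : ℚ) (((l:ℤ)):ℚ) - ((l:ℤ):ℚ) * (S.card:ℚ) / (M.E.ncard : ℚ)) • xcl M S := by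
    rw [gamma, gammaPoly_rep M (l:ℤ) (by positivity)
        (by rw [hEn]; exact_mod_cast (by omega : l ≤ n + 1)), map_sum,
      ← sum_chowvar M (fun S => (min (S.card : ℚ) ((l:ℤ):ℚ)
          - ((l:ℤ):ℚ) * (S.card:ℚ) / (M.E.ncard : ℚ)) • xcl M S)
        (fun S hS => by simp only [xcl_zero M hS, smul_zero])]
    refine Finset.sum_congr rfl fun F _ => ?_
    rw [map_smul, xcl_coe]
  have hB : ∀ k : ℤ, 0 ≤ k → k ≤ (n:ℤ) →
      thetaTilde M i (gammaPoly M' k)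
        = (∑ S : Finset (Fin (n+1)), (if ProperFlat M' S then
              (min (S.card : ℚ) (k:ℚ) - (k:ℚ) * (S.card:ℚ) / (M'.E.ncard : ℚ)) else 0) • xcl M S)
          + ∑ S : Finset (Fin (n+1)), (if i ∈ S ∧ ProperFlat M' (S.erase i) then
              (min (((S.erase i).card : ℚ)) (k:ℚ)
                - (k:ℚ) * ((S.erase i).card:ℚ) / (M'.E.ncard : ℚ)) else 0) • xcl M S := by
    intro k hk0 hk
    rw [gammaPoly_rep M' k hk0 (by rw [hn']; exact hk), map_sum]
    have step1 : ∀ G : ChowVar M', thetaTilde M i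
        ((min (G.1.card : ℚ) (k:ℚ) - (k:ℚ) * (G.1.card:ℚ) / (M'.E.ncard : ℚ)) • MvPolynomial.X G)
        = (min (G.1.card : ℚ) (k:ℚ) - (k:ℚ) * (G.1.card:ℚ) / (M'.E.ncard : ℚ))
            • (xcl M G.1 + xcl M (insert i G.1)) := by
      intro G
      rw [map_smul]
      congr 1
      exact MvPolynomial.aeval_X _ G
    rw [Finset.sum_congr rfl (fun G _ => step1 G)]
    simp only [smul_add]
    rw [Finset.sum_add_distrib]
    congr 1
    · rw [← sum_chowvar M' (fun S => (if ProperFlat M' S then (min (S.card:ℚ) (k:ℚ)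
          - (k:ℚ)*(S.card:ℚ)/(M'.E.ncard:ℚ)) else 0) • xcl M S)
          (fun S hS => by simp only [if_neg hS, zero_smul])]
      exact Finset.sum_congr rfl fun G _ => by rw [if_pos G.2]
    · rw [show (∑ S : Finset (Fin (n+1)), (if i ∈ S ∧ ProperFlat M' (S.erase i) then
              (min (((S.erase i).card : ℚ)) (k:ℚ)
                - (k:ℚ) * ((S.erase i).card:ℚ) / (M'.E.ncard : ℚ)) else 0) • xcl M S)
          = ∑ S : Finset (Fin (n+1)), (if i ∈ S ∧ ProperFlat M' (S.erase i) then
              (min (((S.erase i).card : ℚ)) (k:ℚ)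
                - (k:ℚ) * ((S.erase i).card:ℚ) / (M'.E.ncard : ℚ)) • xcl M S else 0)
          from Finset.sum_congr rfl fun S _ => by rw [ite_smul, zero_smul]]
      rw [← sum_insert_reindex i (ProperFlat M') hPFmem
          (fun S T => (min ((S.card:ℚ)) (k:ℚ) - (k:ℚ)*(S.card:ℚ)/(M'.E.ncard:ℚ)) • xcl M T)]
      rw [← sum_chowvar M' (fun S => if ProperFlat M' S then (min (S.card:ℚ) (k:ℚ)
            - (k:ℚ)*(S.card:ℚ)/(M'.E.ncard:ℚ)) • xcl M (insert i S) else 0)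
          (fun S hS => if_neg hS)]
      exact Finset.sum_congr rfl fun G _ => (if_pos G.2).symm
  have hnQ : (0:ℚ) < (n:ℚ) := by exact_mod_cast hn1
  have hn1Q : (0:ℚ) < (n:ℚ) + 1 := by linarith
  have hnne : (n:ℚ) ≠ 0 := ne_of_gt hnQ
  have hn1ne : (n:ℚ) + 1 ≠ 0 := ne_of_gt hn1Q
  constructor
  · have hC1 : (∑ S ∈ Finset.univ.filter (fun S : ChowVar M => i ∉ S.1 ∧ l ≤ S.1.card),
        chowMk M (MvPolynomial.X S))
        = ∑ S : Finset (Fin (n+1)), (if i ∉ S ∧ l ≤ S.card then (1:ℚ) else 0) • xcl M S := by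
      rw [Finset.sum_filter,
        ← sum_chowvar M (fun S => (if i ∉ S ∧ l ≤ S.card then (1:ℚ) else 0) • xcl M S)
          (fun S hS => by simp only [xcl_zero M hS, smul_zero])]
      refine Finset.sum_congr rfl fun F _ => ?_
      rw [xcl_coe, ite_smul, one_smul, zero_smul]
    rw [hA, hB ((l:ℤ) - 1) (by omega) (by omega), hC1, sum_smul_add, sum_smul_add]
    refine chow_master M hE i _ _ (((n:ℚ) + 1 - (l:ℚ)) / ((n:ℚ) * ((n:ℚ) + 1))) ?_
    intro S hS
    have hs1 : 1 ≤ S.card := Finset.card_pos.mpr hS.2.1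
    have hsn : S.card ≤ n := hcard_le S hS
    rw [hEn, hn']
    simp only [Fintype.card_fin]
    by_cases hiS : i ∈ S
    · have hP'F : ¬ ProperFlat M' S := fun h => hPFmem S h hiS
      rw [if_neg hP'F]
      simp only [hiS, not_true_eq_false, false_and, if_false, true_and, if_true]
      rw [hflat2 S hS hiS, Finset.card_erase_of_mem hiS]
      have hc : ((S.card - 1 : ℕ) : ℚ) = (S.card : ℚ) - 1 := by
        rw [Nat.cast_sub hs1, Nat.cast_one]
      by_cases h2 : 2 ≤ S.card
      · rw [if_pos h2, hc]
        push_cast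
        by_cases hsl : S.card ≤ l
        · rw [min_eq_left (by exact_mod_cast hsl : (S.card:ℚ) ≤ (l:ℚ)),
            min_eq_left (by
              have : (S.card:ℚ) ≤ (l:ℚ) := by exact_mod_cast hsl
              linarith : (S.card:ℚ) - 1 ≤ (l:ℚ) - 1)]
          field_simp
          ring
        · push_neg at hsl
          rw [min_eq_right (by exact_mod_cast hsl.le : (l:ℚ) ≤ (S.card:ℚ)),
            min_eq_right (by
              have : (l:ℚ) ≤ (S.card:ℚ) := by exact_mod_cast hsl.le
              linarith : (l:ℚ) - 1 ≤ (S.card:ℚ) - 1)]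
          field_simp
          ring
      · rw [if_neg h2]
        have hs : S.card = 1 := by omega
        rw [hs]
        push_cast
        rw [min_eq_left (by exact_mod_cast hl1 : (1:ℚ) ≤ (l:ℚ))]
        field_simp
        ring
    · rw [if_neg (by simp [hiS] : ¬(i ∈ S ∧ ProperFlat M' (S.erase i))),
        if_neg hiS, hflat1 S hS hiS]
      simp only [hiS, not_false_eq_true, true_and]
      push_cast
      by_cases hcn : S.card < n
      · rw [if_pos hcn]
        by_cases hls : l ≤ S.card
        · rw [if_pos hls, min_eq_right (by exact_mod_cast hls : (l:ℚ) ≤ (S.card:ℚ)),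
            min_eq_right (by
              have : (l:ℚ) ≤ (S.card:ℚ) := by exact_mod_cast hls
              linarith : (l:ℚ) - 1 ≤ (S.card:ℚ))]
          field_simp
          ring
        · push_neg at hls
          rw [if_neg (by omega : ¬ l ≤ S.card),
            min_eq_left (by exact_mod_cast hls.le : (S.card:ℚ) ≤ (l:ℚ)),
            min_eq_left (by
              have : (S.card:ℚ) + 1 ≤ (l:ℚ) := by exact_mod_cast hls
              linarith : (S.card:ℚ) ≤ (l:ℚ) - 1)]
          field_simp
          ring
      · rw [if_neg hcn, if_pos (by omega : l ≤ S.card)]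
        have hsn' : S.card = n := by omega
        rw [hsn', min_eq_right (by exact_mod_cast hln : (l:ℚ) ≤ (n:ℚ))]
        field_simp
        ring
  · have hC2 : (∑ S ∈ Finset.univ.filter (fun S : ChowVar M => i ∈ S.1 ∧ S.1.card ≤ l),
        chowMk M (MvPolynomial.X S))
        = ∑ S : Finset (Fin (n+1)), (if i ∈ S ∧ S.card ≤ l then (1:ℚ) else 0) • xcl M S := by
      rw [Finset.sum_filter,
        ← sum_chowvar M (fun S => (if i ∈ S ∧ S.card ≤ l then (1:ℚ) else 0) • xcl M S)
          (fun S hS => by simp only [xcl_zero M hS, smul_zero])]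
      refine Finset.sum_congr rfl fun F _ => ?_
      rw [xcl_coe, ite_smul, one_smul, zero_smul]
    rw [hA, hB (l:ℤ) (by omega) (by omega), hC2, sum_smul_add, sum_smul_add]
    refine chow_master M hE i _ _ (-((l:ℚ) / ((n:ℚ) * ((n:ℚ) + 1)))) ?_
    intro S hS
    have hs1 : 1 ≤ S.card := Finset.card_pos.mpr hS.2.1
    have hsn : S.card ≤ n := hcard_le S hS
    rw [hEn, hn']
    simp only [Fintype.card_fin]
    by_cases hiS : i ∈ S
    · have hP'F : ¬ ProperFlat M' S := fun h => hPFmem S h hiS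
      rw [if_neg hP'F]
      simp only [hiS, true_and, if_true]
      rw [hflat2 S hS hiS, Finset.card_erase_of_mem hiS]
      have hc : ((S.card - 1 : ℕ) : ℚ) = (S.card : ℚ) - 1 := by
        rw [Nat.cast_sub hs1, Nat.cast_one]
      by_cases h2 : 2 ≤ S.card
      · rw [if_pos h2, hc]
        push_cast
        by_cases hsl : S.card ≤ l
        · rw [if_pos hsl, min_eq_left (by exact_mod_cast hsl : (S.card:ℚ) ≤ (l:ℚ)),
            min_eq_left (by
              have : (S.card:ℚ) ≤ (l:ℚ) := by exact_mod_cast hsl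
              linarith : (S.card:ℚ) - 1 ≤ (l:ℚ))]
          field_simp
          ring
        · push_neg at hsl
          rw [if_neg (by omega : ¬ S.card ≤ l),
            min_eq_right (by exact_mod_cast hsl.le : (l:ℚ) ≤ (S.card:ℚ)),
            min_eq_right (by
              have : (l:ℚ) + 1 ≤ (S.card:ℚ) := by exact_mod_cast hsl
              linarith : (l:ℚ) ≤ (S.card:ℚ) - 1)]
          field_simp
          ring
      · rw [if_neg h2]
        have hs : S.card = 1 := by omega
        rw [hs, if_pos hl1]
        push_cast
        rw [min_eq_left (by exact_mod_cast hl1 : (1:ℚ) ≤ (l:ℚ))]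
        field_simp
        ring
    · rw [if_neg (by simp [hiS] : ¬(i ∈ S ∧ ProperFlat M' (S.erase i))),
        if_neg (by simp [hiS] : ¬(i ∈ S ∧ S.card ≤ l)), if_neg hiS, hflat1 S hS hiS]
      push_cast
      by_cases hcn : S.card < n
      · rw [if_pos hcn]
        field_simp
        ring
      · rw [if_neg hcn]
        have hsn' : S.card = n := by omega
        rw [hsn', min_eq_right (by exact_mod_cast hln : (l:ℚ) ≤ (n:ℚ))]
        field_simp
        ring

end
end

section
/- Let 1 ≤ ℓ ≤ n. (1) For every nonempty proper flat F of M with |F| ≤ ℓ and i ∈ F, one has θ̃_i(Γ_{ℓ−1}^{M∖i})·x_F = γ_ℓ·x_F in A*(M). (2) For every nonempty proper flat F of M with |F| ≥ ℓ and i ∉ F, one has θ̃_i(Γ_ℓ^{M∖i})·x_F = γ_ℓ·x_F in A*(M). -/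
/-!
Common setup: Chow rings of matroids, hypersimplex classes, degree functionals.
The ground set is a finite type `α`; for a matroid `M` on `α` the Chow ring
`A*(M)` is the quotient of the polynomial ring over `ℚ` on variables indexed by
the nonempty proper flats of `M` by the ideal generated by products of
incomparable variables and the linear elements `∑_{F ∋ i} x_F - ∑_{F ∋ j} x_F`.
-/

open scoped Classical

set_option maxHeartbeats 1000000
set_option synthInstance.maxHeartbeats 1000000

noncomputable section

section Aux

variable {α : Type*} [Fintype α] [DecidableEq α]

open Finset MvPolynomial

lemma sum_over_subtype {ι : Type*} [Fintype ι] {β : Type*} [AddCommMonoid β]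
    (p : ι → Prop) [Fintype {x // p x}] (g : ι → β) (hg : ∀ x, ¬ p x → g x = 0) :
    ∑ F : {x // p x}, g F.1 = ∑ x : ι, g x := by
  classical
  rw [← Finset.sum_subtype (Finset.univ.filter p) (fun x => by simp) g]
  exact Finset.sum_filter_of_ne (fun x _ hx => by_contra fun h => hx (hg x h))

lemma xcl_of_proper (M : Matroid α) {s : Finset α} (h : ProperFlat M s) :
    xcl M s = chowMk M (MvPolynomial.X (⟨s, h⟩ : ChowVar M)) := dif_pos h

lemma xcl_of_not (M : Matroid α) {s : Finset α} (h : ¬ ProperFlat M s) :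
    xcl M s = 0 := dif_neg h

lemma chowMk_sum (M : Matroid α) (c : Finset α → ℚ) :
    chowMk M (∑ F : ChowVar M, c F.1 • MvPolynomial.X F) = ∑ s : Finset α, c s • xcl M s := by
  rw [map_sum]
  have h1 : ∀ F : ChowVar M, (chowMk M) (c F.1 • MvPolynomial.X F) = c F.1 • xcl M F.1 := by
    intro F
    rw [map_smul, xcl_of_proper M F.2]
  rw [Finset.sum_congr rfl fun F _ => h1 F]
  exact sum_over_subtype (ProperFlat M) (fun s => c s • xcl M s)
    (fun s hs => by show c s • xcl M s = 0; rw [xcl_of_not M hs, smul_zero])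

lemma xcl_mul_X_eq_zero (M : Matroid α) (F : ChowVar M) {s : Finset α}
    (h1 : ¬ s ⊆ F.1) (h2 : ¬ F.1 ⊆ s) : xcl M s * chowMk M (MvPolynomial.X F) = 0 := by
  by_cases hp : ProperFlat M s
  · rw [xcl_of_proper M hp, ← map_mul]
    rw [chowMk, Ideal.Quotient.mkₐ_eq_mk]
    exact Ideal.Quotient.eq_zero_iff_mem.mpr (Ideal.subset_span
      (Or.inl ⟨⟨s, hp⟩, F, h1, h2, rfl⟩))
  · rw [xcl_of_not M hp, zero_mul]

lemma u_indep (M : Matroid α) (hE : M.E = Set.univ) (i j : α) :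
    ∑ s : Finset α, (if j ∈ s then (1:ℚ) else 0) • xcl M s
      = ∑ s : Finset α, (if i ∈ s then (1:ℚ) else 0) • xcl M s := by
  have hmem : chowMk M ((∑ F : ChowVar M, if j ∈ F.1 then MvPolynomial.X F else 0)
      - (∑ F : ChowVar M, if i ∈ F.1 then MvPolynomial.X F else 0)) = 0 := by
    rw [chowMk, Ideal.Quotient.mkₐ_eq_mk]
    exact Ideal.Quotient.eq_zero_iff_mem.mpr (Ideal.subset_span
      (Or.inr ⟨j, by rw [hE]; trivial, i, by rw [hE]; trivial, rfl⟩))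
  rw [map_sub, sub_eq_zero] at hmem
  have conv : ∀ m : α, chowMk M (∑ F : ChowVar M, if m ∈ F.1 then MvPolynomial.X F else 0)
      = ∑ s : Finset α, (if m ∈ s then (1:ℚ) else 0) • xcl M s := by
    intro m
    have e1 : (∑ F : ChowVar M, if m ∈ F.1 then MvPolynomial.X F else 0)
        = ∑ F : ChowVar M, (if m ∈ F.1 then (1:ℚ) else 0) • (MvPolynomial.X F : MvPolynomial (ChowVar M) ℚ) :=
      Finset.sum_congr rfl fun F _ => by
        split
        · exact (one_smul ℚ _).symm
        · exact (zero_smul ℚ _).symm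
    rw [e1]
    exact chowMk_sum M (fun s => if m ∈ s then (1:ℚ) else 0)
  rw [conv i, conv j] at hmem
  exact hmem

lemma card_sum (M : Matroid α) (hE : M.E = Set.univ) (i : α) :
    ∑ s : Finset α, (s.card : ℚ) • xcl M s
      = (Fintype.card α : ℚ) • ∑ s : Finset α, (if i ∈ s then (1:ℚ) else 0) • xcl M s := by
  have h1 : ∀ s : Finset α, (s.card : ℚ) = ∑ j : α, (if j ∈ s then (1:ℚ) else 0) := by
    intro s
    rw [Finset.sum_ite_mem, Finset.univ_inter, Finset.sum_const, nsmul_eq_mul, mul_one]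
  calc ∑ s : Finset α, (s.card : ℚ) • xcl M s
      = ∑ s : Finset α, ∑ j : α, (if j ∈ s then (1:ℚ) else 0) • xcl M s := by
        refine Finset.sum_congr rfl (fun s _ => ?_)
        rw [h1 s, Finset.sum_smul]
    _ = ∑ j : α, ∑ s : Finset α, (if j ∈ s then (1:ℚ) else 0) • xcl M s := Finset.sum_comm
    _ = ∑ _j : α, ∑ s : Finset α, (if i ∈ s then (1:ℚ) else 0) • xcl M s :=
        Finset.sum_congr rfl (fun j _ => u_indep M hE i j)
    _ = _ := by
        rw [Finset.sum_const, Finset.card_univ, Nat.cast_smul_eq_nsmul ℚ]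

end Aux
section Aux2

variable {α : Type*} [Fintype α] [DecidableEq α]

open Finset MvPolynomial

lemma flat_restrict_of_not_mem (M : Matroid α) {F : Set α} {i : α}
    (hF : M.IsFlat F) (hi : i ∉ F) : (M.restrict (M.E \ {i})).IsFlat F := by
  constructor
  · intro I X hIF hIX
    rw [Matroid.isBasis_restrict_iff Set.diff_subset] at hIF hIX
    exact hIX.1.subset_closure.trans
      (by rw [hIF.1.closure_eq_closure, hF.closure])
  · rw [Matroid.restrict_ground_eq]
    exact Set.subset_diff.mpr ⟨hF.subset_ground, Set.disjoint_singleton_right.mpr hi⟩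

lemma flat_restrict_erase (M : Matroid α) {F : Set α} {i : α}
    (hF : M.IsFlat F) : (M.restrict (M.E \ {i})).IsFlat (F \ {i}) := by
  constructor
  · intro I X hIF hIX
    rw [Matroid.isBasis_restrict_iff Set.diff_subset] at hIF hIX
    have hXF : X ⊆ F := hIX.1.subset_closure.trans
      (by rw [hIF.1.closure_eq_closure]
          exact (M.closure_subset_closure Set.diff_subset).trans_eq hF.closure)
    exact fun x hx => ⟨hXF hx, (hIX.2 hx).2⟩
  · rw [Matroid.restrict_ground_eq]
    exact Set.diff_subset_diff_left hF.subset_ground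

lemma not_mem_of_properFlat_restrict (M : Matroid α) {i : α} {s : Finset α}
    (h : ProperFlat (M.restrict (M.E \ {i})) s) : i ∉ s := by
  intro hi
  have := h.1.subset_ground
  rw [Matroid.restrict_ground_eq] at this
  exact (this (by exact_mod_cast hi)).2 rfl

/-- The key vanishing lemma: a coefficient function which is affine in `|s|` and `[i ∈ s]`
on flats comparable to `F`, with vanishing total weight, gives zero product with `x_F`. -/
lemma key_vanish (M : Matroid α) (hE : M.E = Set.univ) (i : α) (F : ChowVar M)
    (e : Finset α → ℚ) (a b : ℚ)
    (hab : a * (Fintype.card α : ℚ) + b = 0)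
    (he : ∀ s : Finset α, ProperFlat M s → (s ⊆ F.1 ∨ F.1 ⊆ s) →
      e s = a * s.card + b * (if i ∈ s then 1 else 0)) :
    (∑ s : Finset α, e s • xcl M s) * chowMk M (MvPolynomial.X F) = 0 := by
  have hstep : ∀ s : Finset α,
      (e s • xcl M s) * chowMk M (MvPolynomial.X F)
        = ((a * s.card + b * (if i ∈ s then 1 else 0)) • xcl M s) * chowMk M (MvPolynomial.X F) := by
    intro s
    by_cases hp : ProperFlat M s
    · by_cases hcomp : s ⊆ F.1 ∨ F.1 ⊆ s
      · rw [he s hp hcomp]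
      · push_neg at hcomp
        have h0 : xcl M s * chowMk M (MvPolynomial.X F) = 0 :=
          xcl_mul_X_eq_zero M F hcomp.1 hcomp.2
        rw [smul_mul_assoc, h0, smul_zero, smul_mul_assoc, h0, smul_zero]
    · rw [xcl_of_not M hp, smul_zero, smul_zero]
  rw [Finset.sum_mul, Finset.sum_congr rfl fun s _ => hstep s, ← Finset.sum_mul]
  have hsplit : (∑ s : Finset α, (a * s.card + b * (if i ∈ s then 1 else 0)) • xcl M s)
      = a • (∑ s : Finset α, (s.card : ℚ) • xcl M s)
        + b • (∑ s : Finset α, (if i ∈ s then (1:ℚ) else 0) • xcl M s) := by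
    rw [Finset.smul_sum, Finset.smul_sum, ← Finset.sum_add_distrib]
    refine Finset.sum_congr rfl (fun s _ => ?_)
    rw [add_smul, mul_smul, mul_smul]
  rw [hsplit, card_sum M hE i, smul_smul, ← add_smul, hab, zero_smul, zero_mul]

end Aux2
section Aux3

variable {α : Type*} [Fintype α] [DecidableEq α]

open Finset MvPolynomial

/-- The coefficient of the canonical hypersimplex representative, as a function of size. -/
def cq (N k m : ℕ) : ℚ := min (m : ℚ) (k : ℚ) - (k : ℚ) * (m : ℚ) / (N : ℚ)

lemma cq_k_zero (N m : ℕ) : cq N 0 m = 0 := by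
  unfold cq
  rw [Nat.cast_zero, min_eq_right (by positivity), zero_mul, zero_div, sub_zero]

lemma cq_m_zero (N k : ℕ) : cq N k 0 = 0 := by
  unfold cq
  rw [Nat.cast_zero, min_eq_left (by positivity), mul_zero, zero_div, sub_zero]

lemma cq_m_top (N k : ℕ) (hk : k ≤ N) (hN : N ≠ 0) : cq N k N = 0 := by
  unfold cq
  have hN' : (N : ℚ) ≠ 0 := Nat.cast_ne_zero.mpr hN
  rw [min_eq_right (by exact_mod_cast hk)]
  field_simp
  ring

lemma cq_k_top (N m : ℕ) (hm : m ≤ N) (hN : N ≠ 0) : cq N N m = 0 := by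
  unfold cq
  have hN' : (N : ℚ) ≠ 0 := Nat.cast_ne_zero.mpr hN
  rw [min_eq_left (by exact_mod_cast hm)]
  field_simp
  ring

lemma gamma_rep (M : Matroid α) (hE : M.E = Set.univ) (l : ℕ) (hl1 : 1 ≤ l)
    (hln : (l : ℤ) ≤ (Fintype.card α : ℤ) - 1) :
    gamma M (l : ℤ) = ∑ s : Finset α, cq (Fintype.card α) l s.card • xcl M s := by
  have hn : M.E.ncard = Fintype.card α := by
    rw [hE, Set.ncard_univ, Nat.card_eq_fintype_card]
  rw [gamma, gammaPoly, if_pos ⟨by exact_mod_cast hl1, by rw [hn]; exact hln⟩]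
  have hco : ∀ s : Finset α,
      (min (s.card : ℚ) (((l : ℤ) : ℚ)) - ((l : ℤ) : ℚ) * (s.card : ℚ) / (M.E.ncard : ℚ))
        = cq (Fintype.card α) l s.card := by
    intro s
    unfold cq
    rw [hn]
    push_cast
    ring_nf
  rw [Finset.sum_congr rfl fun (F : ChowVar M) _ => by rw [hco F.1]]
  exact chowMk_sum M (fun s => cq (Fintype.card α) l s.card)

end Aux3
section Aux4

variable {α : Type*} [Fintype α] [DecidableEq α]

open Finset MvPolynomial

lemma theta_rep (M : Matroid α) (hE : M.E = Set.univ) (i : α) (k : ℕ)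
    (hk : (k : ℤ) ≤ (Fintype.card α : ℤ) - 1) (hcard : 2 ≤ Fintype.card α) :
    thetaTilde M i (gammaPoly (M.restrict (M.E \ {i})) (k : ℤ))
      = ∑ s : Finset α, (if i ∈ s then cq (Fintype.card α - 1) k (s.erase i).card
          else cq (Fintype.card α - 1) k s.card) • xcl M s := by
  set N := M.restrict (M.E \ {i}) with hN
  set nn := Fintype.card α - 1 with hnn
  have hnn1 : 1 ≤ nn := by omega
  have hnn0 : nn ≠ 0 := by omega
  have hNE : N.E = Set.univ \ {i} := by rw [hN, Matroid.restrict_ground_eq, hE]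
  have hNEfin : N.E = ↑(Finset.univ.erase i) := by
    rw [hNE, Finset.coe_erase, Finset.coe_univ]
  have hncard : N.E.ncard = nn := by
    rw [hNEfin, Set.ncard_coe_finset, Finset.card_erase_of_mem (Finset.mem_univ i),
      Finset.card_univ]
  have hknn : k ≤ nn := by omega
  have hGsub : ∀ G : ChowVar N, G.1 ⊆ Finset.univ.erase i := by
    intro G
    intro x hx
    have := G.2.1.subset_ground
    rw [hNEfin] at this
    exact_mod_cast this (by exact_mod_cast hx)
  have hGcard : ∀ G : ChowVar N, G.1.card ≤ nn := by
    intro G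
    calc G.1.card ≤ (Finset.univ.erase i).card := Finset.card_le_card (hGsub G)
      _ = nn := by rw [Finset.card_erase_of_mem (Finset.mem_univ i), Finset.card_univ]
  -- Step 1 : the polynomial as an explicit sum
  have step1 : gammaPoly N (k : ℤ) = ∑ G : ChowVar N, cq nn k G.1.card • MvPolynomial.X G := by
    by_cases hc : 1 ≤ (k : ℤ) ∧ (k : ℤ) ≤ (N.E.ncard : ℤ) - 1
    · rw [gammaPoly, if_pos hc]
      refine Finset.sum_congr rfl fun G _ => ?_
      congr 1
      unfold cq
      rw [hncard]
      push_cast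
      ring_nf
    · rw [gammaPoly, if_neg hc]
      symm
      apply Finset.sum_eq_zero
      intro G _
      rw [hncard] at hc
      have : k = 0 ∨ k = nn := by omega
      rcases this with rfl | rfl
      · rw [cq_k_zero, zero_smul]
      · rw [cq_k_top nn G.1.card (hGcard G) hnn0, zero_smul]
  -- Step 2 : apply thetaTilde
  have step2 : thetaTilde M i (gammaPoly N (k : ℤ))
      = ∑ G : ChowVar N, cq nn k G.1.card • (xcl M G.1 + xcl M (insert i G.1)) := by
    rw [step1, map_sum]
    refine Finset.sum_congr rfl fun G _ => ?_
    rw [map_smul]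
    congr 1
    simp only [thetaTilde, MvPolynomial.aeval_X]
  -- Claims
  have claim1 : ∑ G : ChowVar N, cq nn k G.1.card • xcl M G.1
      = ∑ s : Finset α, (if i ∈ s then 0 else cq nn k s.card • xcl M s) := by
    have h1 : ∑ G : ChowVar N, cq nn k G.1.card • xcl M G.1
        = ∑ s : Finset α, (if ProperFlat N s then cq nn k s.card • xcl M s else 0) := by
      rw [← sum_over_subtype (ProperFlat N)
        (fun s => if ProperFlat N s then cq nn k s.card • xcl M s else 0)
        (fun s hs => if_neg hs)]
      exact Finset.sum_congr rfl fun G _ => (if_pos G.2).symm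
    rw [h1]
    refine Finset.sum_congr rfl fun s _ => ?_
    by_cases hi : i ∈ s
    · rw [if_pos hi, if_neg (fun hP => not_mem_of_properFlat_restrict M hP hi)]
    · rw [if_neg hi]
      by_cases hP : ProperFlat N s
      · rw [if_pos hP]
      · rw [if_neg hP]
        by_cases hPM : ProperFlat M s
        · have hflat : N.IsFlat ↑s := flat_restrict_of_not_mem M hPM.1 (by simpa using hi)
          have hsE : (↑s : Set α) = N.E := by
            by_contra hne
            exact hP ⟨hflat, hPM.2.1, hne⟩
          have hseq : s = Finset.univ.erase i := by
            apply Finset.coe_injective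
            rw [Finset.coe_erase, Finset.coe_univ, hsE, hNE]
          have hc0 : cq nn k s.card = 0 := by
            rw [hseq, Finset.card_erase_of_mem (Finset.mem_univ i), Finset.card_univ]
            exact cq_m_top nn k hknn hnn0
          rw [hc0, zero_smul]
        · rw [xcl_of_not M hPM, smul_zero]
  have claim2 : ∑ G : ChowVar N, cq nn k G.1.card • xcl M (insert i G.1)
      = ∑ s : Finset α, (if i ∈ s then cq nn k (s.erase i).card • xcl M s else 0) := by
    have h1 : ∑ G : ChowVar N, cq nn k G.1.card • xcl M (insert i G.1)
        = ∑ s : Finset α, (if ProperFlat N s then cq nn k s.card • xcl M (insert i s) else 0) := by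
      rw [← sum_over_subtype (ProperFlat N)
        (fun s => if ProperFlat N s then cq nn k s.card • xcl M (insert i s) else 0)
        (fun s hs => if_neg hs)]
      exact Finset.sum_congr rfl fun G _ => (if_pos G.2).symm
    have h2 : ∑ s : Finset α, (if i ∈ s then cq nn k (s.erase i).card • xcl M s else 0)
        = ∑ t : Finset α, (if i ∉ t then cq nn k t.card • xcl M (insert i t) else 0) := by
      rw [← Finset.sum_filter, eq_comm, ← Finset.sum_filter]
      refine Finset.sum_bij' (fun t _ => insert i t) (fun s _ => s.erase i) ?_ ?_ ?_ ?_ ?_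
      · intro t ht
        simp only [Finset.mem_filter, Finset.mem_univ, true_and] at ht ⊢
        exact Finset.mem_insert_self i t
      · intro s hs
        simp only [Finset.mem_filter, Finset.mem_univ, true_and] at hs ⊢
        exact Finset.notMem_erase i s
      · intro t ht
        simp only [Finset.mem_filter, Finset.mem_univ, true_and] at ht
        exact Finset.erase_insert ht
      · intro s hs
        simp only [Finset.mem_filter, Finset.mem_univ, true_and] at hs
        exact Finset.insert_erase hs
      · intro t ht
        simp only [Finset.mem_filter, Finset.mem_univ, true_and] at ht
        rw [Finset.erase_insert ht]
    rw [h1, h2]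
    refine Finset.sum_congr rfl fun t _ => ?_
    by_cases hit : i ∈ t
    · rw [if_neg (fun hP => not_mem_of_properFlat_restrict M hP hit),
        if_neg (not_not.mpr hit)]
    · rw [if_pos hit]
      by_cases hP : ProperFlat N t
      · rw [if_pos hP]
      · rw [if_neg hP]
        by_cases hPM : ProperFlat M (insert i t)
        · rcases eq_or_ne t ∅ with rfl | hne
          · rw [Finset.card_empty, cq_m_zero, zero_smul]
          · exfalso
            apply hP
            refine ⟨?_, Finset.nonempty_iff_ne_empty.mpr hne, ?_⟩
            · have hfl := flat_restrict_erase M (F := ↑(insert i t)) (i := i) hPM.1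
              have heq : (↑(insert i t) : Set α) \ {i} = ↑t := by
                rw [Finset.coe_insert, Set.insert_diff_self_of_notMem (by simpa using hit)]
              rwa [heq] at hfl
            · intro hteq
              apply hPM.2.2
              rw [hNE] at hteq
              rw [hE, Finset.coe_insert, hteq, Set.insert_diff_singleton, Set.insert_eq_self.mpr (Set.mem_univ i)]
        · rw [xcl_of_not M hPM, smul_zero]
  -- combine
  rw [step2]
  calc ∑ G : ChowVar N, cq nn k G.1.card • (xcl M G.1 + xcl M (insert i G.1))
      = (∑ G : ChowVar N, cq nn k G.1.card • xcl M G.1)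
        + ∑ G : ChowVar N, cq nn k G.1.card • xcl M (insert i G.1) := by
        rw [← Finset.sum_add_distrib]
        exact Finset.sum_congr rfl fun G _ => smul_add _ _ _
    _ = ∑ s : Finset α, ((if i ∈ s then 0 else cq nn k s.card • xcl M s)
          + (if i ∈ s then cq nn k (s.erase i).card • xcl M s else 0)) := by
        rw [claim1, claim2, Finset.sum_add_distrib]
    _ = _ := by
        refine Finset.sum_congr rfl fun s _ => ?_
        by_cases hi : i ∈ s
        · rw [if_pos hi, if_pos hi, if_pos hi, zero_add]
        · rw [if_neg hi, if_neg hi, if_neg hi, add_zero]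

end Aux4
/-- Let `1 ≤ ℓ ≤ n`.
(1) For every nonempty proper flat `F` with `|F| ≤ ℓ` and `i ∈ F`:
`θ̃_i(Γ_{ℓ-1}^{M∖i})·x_F = γ_ℓ·x_F`.
(2) For every nonempty proper flat `F` with `|F| ≥ ℓ` and `i ∉ F`:
`θ̃_i(Γ_ℓ^{M∖i})·x_F = γ_ℓ·x_F`. -/
theorem stmt5 {n r : ℕ} (M : Matroid (Fin (n + 1))) (hE : M.E = Set.univ)
    (hM : Loopless M) (hrk : mrank M M.E = r + 1) (i : Fin (n + 1))
    (l : ℕ) (hl1 : 1 ≤ l) (hln : l ≤ n) :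
    (∀ F : ChowVar M, F.1.card ≤ l → i ∈ F.1 →
      thetaTilde M i (gammaPoly (M.restrict (M.E \ {i})) ((l : ℤ) - 1)) *
          chowMk M (MvPolynomial.X F) =
        gamma M l * chowMk M (MvPolynomial.X F)) ∧
    (∀ F : ChowVar M, l ≤ F.1.card → i ∉ F.1 →
      thetaTilde M i (gammaPoly (M.restrict (M.E \ {i})) (l : ℤ)) *
          chowMk M (MvPolynomial.X F) =
        gamma M l * chowMk M (MvPolynomial.X F)) := by
  have hc : Fintype.card (Fin (n + 1)) = n + 1 := Fintype.card_fin _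
  have hn1 : 1 ≤ n := le_trans hl1 hln
  have hq0 : (n : ℚ) ≠ 0 := Nat.cast_ne_zero.mpr (by omega)
  have hq1 : ((n : ℚ) + 1) ≠ 0 := by positivity
  have hgam := gamma_rep M hE l hl1 (by rw [hc]; push_cast; omega)
  constructor
  · -- Part 1
    intro F hFl hiF
    have hcast : ((l : ℤ) - 1) = ((l - 1 : ℕ) : ℤ) := by omega
    rw [hcast, theta_rep M hE i (l - 1) (by rw [hc]; push_cast; omega) (by rw [hc]; omega),
      hgam]
    simp only [hc, Nat.add_sub_cancel]
    rw [← sub_eq_zero, ← sub_mul, ← Finset.sum_sub_distrib]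
    simp only [← sub_smul]
    refine key_vanish M hE i F _ ((l : ℚ) / (n + 1) - ((l : ℚ) - 1) / n)
      (((l : ℚ) - 1) / n - 1) ?_ ?_
    · rw [hc]; push_cast; field_simp; ring
    · intro s hs hcomp
      have h1card : 1 ≤ s.card := Finset.card_pos.mpr hs.2.1
      by_cases hi : i ∈ s
      · rw [if_pos hi, if_pos hi]
        unfold cq
        rw [Finset.card_erase_of_mem hi, Nat.cast_sub h1card, Nat.cast_sub hl1,
          Nat.cast_one, min_sub_sub_right]
        push_cast
        field_simp
        ring
      · rw [if_neg hi, if_neg hi]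
        have hsF : s ⊆ F.1 := hcomp.resolve_right (fun h => hi (h hiF))
        have hlt : s.card < F.1.card :=
          Finset.card_lt_card (Finset.ssubset_iff_subset_ne.mpr ⟨hsF, fun h => hi (h ▸ hiF)⟩)
        have hml : s.card + 1 ≤ l := by omega
        unfold cq
        rw [Nat.cast_sub hl1, Nat.cast_one]
        rw [min_eq_left (show (s.card : ℚ) ≤ (l : ℚ) - 1 by
          have : (s.card : ℚ) + 1 ≤ (l : ℚ) := by exact_mod_cast hml
          linarith)]
        rw [min_eq_left (by exact_mod_cast (show s.card ≤ l by omega))]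
        push_cast
        field_simp
        ring
  · -- Part 2
    intro F hFl hiF
    rw [theta_rep M hE i l (by rw [hc]; push_cast; omega) (by rw [hc]; omega), hgam]
    simp only [hc, Nat.add_sub_cancel]
    rw [← sub_eq_zero, ← sub_mul, ← Finset.sum_sub_distrib]
    simp only [← sub_smul]
    refine key_vanish M hE i F _ ((l : ℚ) / (n + 1) - (l : ℚ) / n) ((l : ℚ) / n) ?_ ?_
    · rw [hc]; push_cast; field_simp; ring
    · intro s hs hcomp
      have h1card : 1 ≤ s.card := Finset.card_pos.mpr hs.2.1
      by_cases hi : i ∈ s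
      · rw [if_pos hi, if_pos hi]
        have hFs : F.1 ⊆ s := hcomp.resolve_left (fun h => hiF (h hi))
        have hlt : F.1.card < s.card :=
          Finset.card_lt_card (Finset.ssubset_iff_subset_ne.mpr
            ⟨hFs, fun h => hiF (h.symm ▸ hi)⟩)
        have hls : l + 1 ≤ s.card := by omega
        unfold cq
        rw [Finset.card_erase_of_mem hi, Nat.cast_sub h1card, Nat.cast_one]
        rw [min_eq_right (show (l : ℚ) ≤ (s.card : ℚ) - 1 by
          have : (l : ℚ) + 1 ≤ (s.card : ℚ) := by exact_mod_cast hls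
          linarith)]
        rw [min_eq_right (by exact_mod_cast (show l ≤ s.card by omega))]
        field_simp
        push_cast
        ring
      · rw [if_neg hi, if_neg hi]
        unfold cq
        field_simp
        push_cast
        ring

end
end

section
/- Let M be a perfect matroid design of rank 3 on E (so r = 2), with n_1 < n_2 such that every rank-1 flat has exactly n_1 elements and every rank-2 flat has exactly n_2 elements. Fix a degree functional deg_M for M. Then: deg_M(γ_{n_1}²) = (n+1−n_1)(n+1−n_2)·n_1/n_2, deg_M(γ_{n_1}·γ_{n_2}) = (n+1−n_1)(n+1−n_2), and deg_M(γ_{n_2}²) = (n+1−n_2)². -/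
/-!
Common setup: Chow rings of matroids, hypersimplex classes, degree functionals.
The ground set is a finite type `α`; for a matroid `M` on `α` the Chow ring
`A*(M)` is the quotient of the polynomial ring over `ℚ` on variables indexed by
the nonempty proper flats of `M` by the ideal generated by products of
incomparable variables and the linear elements `∑_{F ∋ i} x_F - ∑_{F ∋ j} x_F`.
-/

open scoped Classical

set_option maxHeartbeats 1000000
set_option synthInstance.maxHeartbeats 1000000

noncomputable section Aux

open scoped Classical

set_option maxHeartbeats 1000000 in
example : True := trivial

variable {α : Type*} [Fintype α] [DecidableEq α] {M : Matroid α}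

omit [Fintype α] [DecidableEq α] in
lemma flat_closure (M : Matroid α) (X : Set α) : M.IsFlat (M.closure X) :=
  ⟨fun I Y hI hY => hY.subset_closure.trans
    (by rw [hI.closure_eq_closure, M.closure_closure]),
   M.closure_subset_ground X⟩

lemma mrank_basis {I S : Set α} (hI : M.IsBasis I S) : mrank M S = I.ncard := by
  have hbdd : BddAbove {m | ∃ J, M.Indep J ∧ J ⊆ S ∧ J.ncard = m} := by
    refine ⟨Fintype.card α, fun m hm => ?_⟩
    obtain ⟨J, _, _, rfl⟩ := hm
    exact Set.ncard_le_ncard (Set.subset_univ J) Set.finite_univ |>.trans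
      (by simp [Set.ncard_univ])
  apply le_antisymm
  · refine csSup_le ⟨I.ncard, I, hI.indep, hI.subset, rfl⟩ ?_
    rintro m ⟨J, hJ, hJS, rfl⟩
    obtain ⟨K, hK, hJK⟩ := hJ.subset_isBasis_of_subset hJS hI.subset_ground
    have := hI.isBase_restrict.ncard_eq_ncard_of_isBase hK.isBase_restrict
    rw [this]
    exact Set.ncard_le_ncard hJK (Set.toFinite K)
  · exact le_csSup hbdd ⟨I, hI.indep, hI.subset, rfl⟩

lemma mrank_indep {I : Set α} (hI : M.Indep I) : mrank M I = I.ncard :=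
  mrank_basis hI.isBasis_self

lemma mrank_closure (M : Matroid α) (S : Set α) (hS : S ⊆ M.E) :
    mrank M (M.closure S) = mrank M S := by
  obtain ⟨I, hI⟩ := M.exists_isBasis S hS
  have h2 : M.IsBasis I (M.closure S) := by
    rw [← hI.closure_eq_closure]; exact hI.indep.isBasis_closure
  rw [mrank_basis hI, mrank_basis h2]

lemma mrank_mono {S T : Set α} (hST : S ⊆ T) (hT : T ⊆ M.E) :
    mrank M S ≤ mrank M T := by
  obtain ⟨I, hI⟩ := M.exists_isBasis S (hST.trans hT)
  obtain ⟨J, hJ, hIJ⟩ := hI.indep.subset_isBasis_of_subset (hI.subset.trans hST) hT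
  rw [mrank_basis hI, mrank_basis hJ]
  exact Set.ncard_le_ncard hIJ (Set.toFinite J)

lemma mrank_insert {S : Set α} (e : α) (hS : S ⊆ M.E) (he : e ∈ M.E)
    (hecl : e ∉ M.closure S) : mrank M (insert e S) = mrank M S + 1 := by
  obtain ⟨I, hI⟩ := M.exists_isBasis S hS
  have heI : e ∉ M.closure I := by rwa [hI.closure_eq_closure]
  have hIe : M.Indep (insert e I) := by
    rw [hI.indep.insert_indep_iff]; left; exact ⟨he, heI⟩
  have hb : M.IsBasis (insert e I) (insert e S) := by
    refine hIe.isBasis_of_subset_of_subset_closure (Set.insert_subset_insert hI.subset) ?_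
    refine Set.insert_subset (M.mem_closure_of_mem (Set.mem_insert e I) ?_) ?_
    · exact Set.insert_subset he hI.indep.subset_ground
    · exact (hI.subset_closure).trans (M.closure_subset_closure (Set.subset_insert e I))
  rw [mrank_basis hI, mrank_basis hb,
    Set.ncard_insert_of_notMem (fun h => heI (M.mem_closure_of_mem h hI.indep.subset_ground))
      (Set.toFinite I)]

lemma flat_eq_of_subset_of_mrank_le {F F' : Set α} (hF : M.IsFlat F) (hF' : M.IsFlat F')
    (hss : F ⊆ F') (hr : mrank M F' ≤ mrank M F) : F = F' := by
  by_contra hne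
  obtain ⟨e, heF', heF⟩ := Set.exists_of_ssubset (ssubset_of_ne_of_subset hne hss)
  have h1 : mrank M (insert e F) = mrank M F + 1 :=
    mrank_insert e hF.subset_ground (hF'.subset_ground heF') (by rwa [hF.closure])
  have h2 : mrank M (insert e F) ≤ mrank M F' :=
    mrank_mono (Set.insert_subset heF' hss) hF'.subset_ground
  omega

end Aux
noncomputable section Aux2
open scoped Classical
set_option linter.unusedSectionVars false

variable {n : ℕ} {M : Matroid (Fin (n + 1))}

lemma subset_ground_univ (hE : M.E = Set.univ) (S : Set (Fin (n+1))) : S ⊆ M.E := by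
  rw [hE]; exact Set.subset_univ S

lemma mrank_single (hE : M.E = Set.univ) (hM : Loopless M) (i : Fin (n+1)) :
    mrank M (M.closure {i}) = 1 := by
  rw [mrank_closure M _ (subset_ground_univ hE _),
    mrank_indep (hM i (by rw [hE]; trivial)), Set.ncard_singleton]

lemma chowvar_rank (hE : M.E = Set.univ) (hM : Loopless M) (hrk : mrank M M.E = 3)
    (v : ChowVar M) : mrank M ↑v.1 = 1 ∨ mrank M ↑v.1 = 2 := by
  obtain ⟨hfl, ⟨i, hi⟩, hne⟩ := v.2
  have h1 : 1 ≤ mrank M ↑v.1 := by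
    have := mrank_mono (M := M) (Set.singleton_subset_iff.mpr (by exact_mod_cast hi))
      (subset_ground_univ hE _)
    rwa [mrank_indep (hM i (by rw [hE]; trivial)), Set.ncard_singleton] at this
  have h2 : mrank M ↑v.1 ≤ 3 := hrk ▸ mrank_mono hfl.subset_ground le_rfl
  rcases Nat.lt_or_ge (mrank M ↑v.1) 3 with h | h
  · omega
  · exfalso
    exact hne (flat_eq_of_subset_of_mrank_le hfl (M.ground_isFlat) hfl.subset_ground (by omega))

/-- the unique point through `i` -/
lemma point_eq_closure (hE : M.E = Set.univ) (hM : Loopless M) {v : ChowVar M}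
    (h1 : mrank M ↑v.1 = 1)
    {i : Fin (n+1)} (hi : i ∈ v.1) : (↑v.1 : Set (Fin (n+1))) = M.closure {i} := by
  have hfl := v.2.1
  have hsub : M.closure {i} ⊆ ↑v.1 := by
    rw [← hfl.closure]
    exact M.closure_subset_closure (Set.singleton_subset_iff.mpr (by exact_mod_cast hi))
  refine (flat_eq_of_subset_of_mrank_le (flat_closure M _) hfl hsub ?_).symm
  rw [h1, mrank_closure M _ (subset_ground_univ hE _),
    mrank_indep (M := M) (hM i (by rw [hE]; trivial)), Set.ncard_singleton]


/-- rank of the closure of a point plus an outside element -/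
lemma mrank_line_closure (hE : M.E = Set.univ) {v : ChowVar M} (h1 : mrank M ↑v.1 = 1)
    {j : Fin (n+1)} (hj : j ∉ v.1) :
    mrank M (M.closure (insert j ↑v.1)) = 2 := by
  rw [mrank_closure M _ (subset_ground_univ hE _),
    mrank_insert j (subset_ground_univ hE _) (by rw [hE]; trivial)
      (by rw [v.2.1.closure]; exact_mod_cast hj), h1]

/-- the unique line through a point `v` and an outside element `j` -/
lemma line_eq_closure (hE : M.E = Set.univ) {v w : ChowVar M}
    (h1 : mrank M ↑v.1 = 1) (h2 : mrank M ↑w.1 = 2) (hsub : v.1 ⊆ w.1)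
    {j : Fin (n+1)} (hj : j ∈ w.1) (hjv : j ∉ v.1) :
    (↑w.1 : Set (Fin (n+1))) = M.closure (insert j ↑v.1) := by
  have hfl := w.2.1
  have hsub2 : M.closure (insert j ↑v.1) ⊆ ↑w.1 := by
    rw [← hfl.closure]
    refine M.closure_subset_closure (Set.insert_subset (by exact_mod_cast hj) ?_)
    exact_mod_cast hsub
  refine (flat_eq_of_subset_of_mrank_le (flat_closure M _) hfl hsub2 ?_).symm
  rw [h2, mrank_line_closure hE h1 hjv]

/-- a finset version of a closed set -/
lemma exists_chowvar_of_flat (hE : M.E = Set.univ) (hrk : mrank M M.E = 3)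
    (S : Set (Fin (n+1))) (hS : S.Nonempty) (hr : mrank M (M.closure S) ≠ 3) :
    ∃ v : ChowVar M, (↑v.1 : Set (Fin (n+1))) = M.closure S := by
  classical
  refine ⟨⟨(M.closure S).toFinset, ?_, ?_, ?_⟩, by simp⟩
  · simpa using flat_closure M S
  · obtain ⟨i, hi⟩ := hS
    refine ⟨i, ?_⟩
    simp only [Set.mem_toFinset]
    exact M.subset_closure S (subset_ground_univ hE S) hi
  · intro h
    rw [Set.coe_toFinset] at h
    exact hr (by rw [h, hrk])

lemma exists_point (hE : M.E = Set.univ) (hM : Loopless M) (hrk : mrank M M.E = 3)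
    (i : Fin (n+1)) :
    ∃ v : ChowVar M, mrank M ↑v.1 = 1 ∧ i ∈ v.1 ∧ (↑v.1 : Set (Fin (n+1))) = M.closure {i} := by
  obtain ⟨v, hv⟩ := exists_chowvar_of_flat hE hrk {i} ⟨i, rfl⟩
    (by rw [mrank_single hE hM]; omega)
  refine ⟨v, ?_, ?_, hv⟩
  · rw [hv]; exact mrank_single hE hM i
  · have : i ∈ (↑v.1 : Set (Fin (n+1))) := by
      rw [hv]; exact M.subset_closure _ (subset_ground_univ hE _) rfl
    exact_mod_cast this

lemma exists_line_through (hE : M.E = Set.univ) (hrk : mrank M M.E = 3)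
    {v : ChowVar M} (h1 : mrank M ↑v.1 = 1) {j : Fin (n+1)} (hj : j ∉ v.1) :
    ∃ w : ChowVar M, mrank M ↑w.1 = 2 ∧ v.1 ⊆ w.1 ∧ j ∈ w.1 := by
  obtain ⟨w, hw⟩ := exists_chowvar_of_flat hE hrk (insert j ↑v.1) ⟨j, Set.mem_insert j _⟩
    (by rw [mrank_line_closure hE h1 hj]; omega)
  have hsub : insert j (↑v.1 : Set (Fin (n+1))) ⊆ ↑w.1 := by
    rw [hw]; exact M.subset_closure _ (subset_ground_univ hE _)
  refine ⟨w, by rw [hw]; exact mrank_line_closure hE h1 hj, ?_, ?_⟩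
  · intro x hx
    have : (x : Fin (n+1)) ∈ (↑w.1 : Set (Fin (n+1))) :=
      hsub (Set.mem_insert_of_mem j (by exact_mod_cast hx))
    exact_mod_cast this
  · have : j ∈ (↑w.1 : Set (Fin (n+1))) := hsub (Set.mem_insert j _)
    exact_mod_cast this

/-- points through a common element coincide -/
lemma point_unique (hE : M.E = Set.univ) (hM : Loopless M) {v w : ChowVar M}
    (hv : mrank M ↑v.1 = 1) (hw : mrank M ↑w.1 = 1) {i : Fin (n+1)}
    (hiv : i ∈ v.1) (hiw : i ∈ w.1) : v = w := by
  apply Subtype.ext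
  apply Finset.coe_injective
  rw [point_eq_closure hE hM hv hiv, point_eq_closure hE hM hw hiw]

/-- a point is contained in every line through one of its elements -/
lemma point_subset_line (hE : M.E = Set.univ) (hM : Loopless M) {v w : ChowVar M}
    (hv : mrank M ↑v.1 = 1) {i : Fin (n+1)} (hiv : i ∈ v.1) (hiw : i ∈ w.1) :
    v.1 ⊆ w.1 := by
  have : (↑v.1 : Set (Fin (n+1))) ⊆ ↑w.1 := by
    rw [point_eq_closure hE hM hv hiv, ← w.2.1.closure]
    exact M.closure_subset_closure (Set.singleton_subset_iff.mpr (by exact_mod_cast hiw))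
  exact_mod_cast this

lemma line_unique (hE : M.E = Set.univ) {v w w' : ChowVar M}
    (h1 : mrank M ↑v.1 = 1) (hw : mrank M ↑w.1 = 2) (hw' : mrank M ↑w'.1 = 2)
    (hsw : v.1 ⊆ w.1) (hsw' : v.1 ⊆ w'.1) {j : Fin (n+1)} (hjv : j ∉ v.1)
    (hjw : j ∈ w.1) (hjw' : j ∈ w'.1) : w = w' := by
  apply Subtype.ext
  apply Finset.coe_injective
  rw [line_eq_closure hE h1 hw hsw hjw hjv, line_eq_closure hE h1 hw' hsw' hjw' hjv]

end Aux2
noncomputable section Aux3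
open scoped Classical
set_option linter.unusedSectionVars false

lemma sum_filter_card {β γ : Type*} (s : Finset β) (t : Finset γ) (R : β → γ → Prop)
    [∀ b c, Decidable (R b c)] :
    ∑ b ∈ s, (t.filter (fun c => R b c)).card = ∑ c ∈ t, (s.filter (fun b => R b c)).card := by
  simp only [Finset.card_filter]
  exact Finset.sum_comm

variable {n : ℕ} {M : Matroid (Fin (n + 1))}

lemma chowvar_ne_univ (v : ChowVar M) (hE : M.E = Set.univ) : ∃ j, j ∉ v.1 := by
  by_contra h
  push_neg at h
  exact v.2.2.2 (by rw [hE, Set.eq_univ_iff_forall]; exact_mod_cast h)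

/-- U1: exactly one point through each element -/
lemma card_points_through (hE : M.E = Set.univ) (hM : Loopless M) (hrk : mrank M M.E = 3)
    (i : Fin (n+1)) :
    (Finset.univ.filter (fun v : ChowVar M => mrank M ↑v.1 = 1 ∧ i ∈ v.1)).card = 1 := by
  obtain ⟨v, hv1, hvi, -⟩ := exists_point hE hM hrk i
  rw [Finset.card_eq_one]
  refine ⟨v, Finset.eq_singleton_iff_unique_mem.mpr ⟨by simp [hv1, hvi], ?_⟩⟩
  rintro w hw
  simp only [Finset.mem_filter] at hw
  exact point_unique hE hM hw.2.1 hv1 hw.2.2 hvi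

/-- U2: exactly one line through a point and an outside element -/
lemma card_lines_through (hE : M.E = Set.univ) (hM : Loopless M) (hrk : mrank M M.E = 3)
    {v : ChowVar M} (hv : mrank M ↑v.1 = 1) {j : Fin (n+1)} (hj : j ∉ v.1) :
    (Finset.univ.filter
      (fun w : ChowVar M => (mrank M ↑w.1 = 2 ∧ v.1 ⊆ w.1) ∧ j ∈ w.1)).card = 1 := by
  obtain ⟨w, hw2, hvw, hjw⟩ := exists_line_through hE hrk hv hj
  rw [Finset.card_eq_one]
  refine ⟨w, Finset.eq_singleton_iff_unique_mem.mpr ⟨Finset.mem_filter.mpr ⟨Finset.mem_univ _, ⟨hw2, hvw⟩, hjw⟩, ?_⟩⟩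
  rintro w' hw'
  simp only [Finset.mem_filter] at hw'
  exact line_unique hE hv hw'.2.1.1 hw2 hw'.2.1.2 hvw hj hw'.2.2 hjw

/-- each element lies in its point, which lies in any line through the element -/
lemma card_points_through_in_line (hE : M.E = Set.univ) (hM : Loopless M)
    (hrk : mrank M M.E = 3) {w : ChowVar M} (hw : mrank M ↑w.1 = 2)
    {i : Fin (n+1)} (hi : i ∈ w.1) :
    (Finset.univ.filter
      (fun v : ChowVar M => (mrank M ↑v.1 = 1 ∧ v.1 ⊆ w.1) ∧ i ∈ v.1)).card = 1 := by
  have heq : (Finset.univ.filter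
      (fun v : ChowVar M => (mrank M ↑v.1 = 1 ∧ v.1 ⊆ w.1) ∧ i ∈ v.1)) =
      (Finset.univ.filter (fun v : ChowVar M => mrank M ↑v.1 = 1 ∧ i ∈ v.1)) := by
    apply Finset.filter_congr
    intro v _
    constructor
    · rintro ⟨⟨h1, -⟩, h2⟩; exact ⟨h1, h2⟩
    · rintro ⟨h1, h2⟩
      exact ⟨⟨h1, point_subset_line hE hM h1 h2 hi⟩, h2⟩
  rw [heq, card_points_through hE hM hrk i]

end Aux3
noncomputable section Aux4
open scoped Classical
set_option linter.unusedSectionVars false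

variable {n : ℕ} {M : Matroid (Fin (n + 1))} {n1 n2 : ℕ}

lemma filter_mem_univ' {β : Type*} [Fintype β] [DecidableEq β] (t : Finset β) :
    Finset.univ.filter (fun i => i ∈ t) = t := by ext; simp

lemma count_NP (hE : M.E = Set.univ) (hM : Loopless M) (hrk : mrank M M.E = 3)
    (hflat1 : ∀ F : Finset (Fin (n + 1)), M.IsFlat ↑F → mrank M ↑F = 1 → F.card = n1) :
    (Finset.univ.filter (fun v : ChowVar M => mrank M ↑v.1 = 1)).card * n1 = n + 1 := by
  have key := sum_filter_card
    (Finset.univ.filter (fun v : ChowVar M => mrank M ↑v.1 = 1))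
    (Finset.univ : Finset (Fin (n+1))) (fun v i => i ∈ v.1)
  simp only [filter_mem_univ'] at key
  have lhs : ∑ v ∈ Finset.univ.filter (fun v : ChowVar M => mrank M ↑v.1 = 1), v.1.card
      = (Finset.univ.filter (fun v : ChowVar M => mrank M ↑v.1 = 1)).card * n1 := by
    rw [Finset.sum_congr rfl (fun v hv => hflat1 v.1 v.2.1 (Finset.mem_filter.mp hv).2),
      Finset.sum_const, smul_eq_mul]
  rw [lhs] at key
  rw [key]
  have : ∀ i : Fin (n+1),
      ((Finset.univ.filter (fun v : ChowVar M => mrank M ↑v.1 = 1)).filter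
        (fun v => i ∈ v.1)).card = 1 := by
    intro i
    rw [Finset.filter_filter]
    exact card_points_through hE hM hrk i
  simp [this]

lemma count_NLthru (hE : M.E = Set.univ) (hM : Loopless M) (hrk : mrank M M.E = 3)
    (hflat1 : ∀ F : Finset (Fin (n + 1)), M.IsFlat ↑F → mrank M ↑F = 1 → F.card = n1)
    (hflat2 : ∀ F : Finset (Fin (n + 1)), M.IsFlat ↑F → mrank M ↑F = 2 → F.card = n2)
    {v : ChowVar M} (hv : mrank M ↑v.1 = 1) :
    (Finset.univ.filter (fun w : ChowVar M => mrank M ↑w.1 = 2 ∧ v.1 ⊆ w.1)).card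
      * (n2 - n1) = (n + 1) - n1 := by
  have key := sum_filter_card
    (Finset.univ.filter (fun w : ChowVar M => mrank M ↑w.1 = 2 ∧ v.1 ⊆ w.1))
    (v.1ᶜ) (fun w j => j ∈ w.1)
  have lhs : ∀ w ∈ Finset.univ.filter (fun w : ChowVar M => mrank M ↑w.1 = 2 ∧ v.1 ⊆ w.1),
      (v.1ᶜ.filter (fun j => j ∈ w.1)).card = n2 - n1 := by
    intro w hw
    rw [Finset.mem_filter] at hw
    have : v.1ᶜ.filter (fun j => j ∈ w.1) = w.1 \ v.1 := by
      ext j; simp [Finset.mem_sdiff, and_comm]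
    rw [this, Finset.card_sdiff_of_subset hw.2.2, hflat2 w.1 w.2.1 hw.2.1, hflat1 v.1 v.2.1 hv]
  rw [Finset.sum_congr rfl lhs, Finset.sum_const, smul_eq_mul] at key
  rw [key]
  have rhs : ∀ j ∈ v.1ᶜ,
      ((Finset.univ.filter (fun w : ChowVar M => mrank M ↑w.1 = 2 ∧ v.1 ⊆ w.1)).filter
        (fun w => j ∈ w.1)).card = 1 := by
    intro j hj
    rw [Finset.filter_filter]
    exact card_lines_through hE hM hrk hv (Finset.mem_compl.mp hj)
  rw [Finset.sum_congr rfl rhs, Finset.sum_const, smul_eq_mul, mul_one, Finset.card_compl,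
    hflat1 v.1 v.2.1 hv, Fintype.card_fin]

lemma count_NLin (hE : M.E = Set.univ) (hM : Loopless M) (hrk : mrank M M.E = 3)
    (hflat1 : ∀ F : Finset (Fin (n + 1)), M.IsFlat ↑F → mrank M ↑F = 1 → F.card = n1)
    (hflat2 : ∀ F : Finset (Fin (n + 1)), M.IsFlat ↑F → mrank M ↑F = 2 → F.card = n2)
    {w : ChowVar M} (hw : mrank M ↑w.1 = 2) :
    (Finset.univ.filter (fun v : ChowVar M => mrank M ↑v.1 = 1 ∧ v.1 ⊆ w.1)).card
      * n1 = n2 := by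
  have key := sum_filter_card
    (Finset.univ.filter (fun v : ChowVar M => mrank M ↑v.1 = 1 ∧ v.1 ⊆ w.1))
    (w.1) (fun v i => i ∈ v.1)
  have lhs : ∀ v ∈ Finset.univ.filter (fun v : ChowVar M => mrank M ↑v.1 = 1 ∧ v.1 ⊆ w.1),
      (w.1.filter (fun i => i ∈ v.1)).card = n1 := by
    intro v hv
    rw [Finset.mem_filter] at hv
    have : w.1.filter (fun i => i ∈ v.1) = v.1 := by
      ext i
      simp only [Finset.mem_filter]
      exact ⟨fun h => h.2, fun h => ⟨hv.2.2 h, h⟩⟩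
    rw [this, hflat1 v.1 v.2.1 hv.2.1]
  rw [Finset.sum_congr rfl lhs, Finset.sum_const, smul_eq_mul] at key
  rw [key]
  have rhs : ∀ i ∈ w.1,
      ((Finset.univ.filter (fun v : ChowVar M => mrank M ↑v.1 = 1 ∧ v.1 ⊆ w.1)).filter
        (fun v => i ∈ v.1)).card = 1 := by
    intro i hi
    rw [Finset.filter_filter]
    exact card_points_through_in_line hE hM hrk hw hi
  rw [Finset.sum_congr rfl rhs, Finset.sum_const, smul_eq_mul, mul_one,
    hflat2 w.1 w.2.1 hw]

lemma exists_line (hE : M.E = Set.univ) (hM : Loopless M) (hrk : mrank M M.E = 3) :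
    ∃ w : ChowVar M, mrank M ↑w.1 = 2 := by
  obtain ⟨v, hv1, -, -⟩ := exists_point hE hM hrk 0
  obtain ⟨j, hj⟩ := chowvar_ne_univ v hE
  obtain ⟨w, hw2, -, -⟩ := exists_line_through hE hrk hv1 hj
  exact ⟨w, hw2⟩

lemma n2_le_n (hE : M.E = Set.univ) (hM : Loopless M) (hrk : mrank M M.E = 3)
    (hflat2 : ∀ F : Finset (Fin (n + 1)), M.IsFlat ↑F → mrank M ↑F = 2 → F.card = n2) :
    n2 ≤ n := by
  obtain ⟨w, hw⟩ := exists_line hE hM hrk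
  obtain ⟨j, hj⟩ := chowvar_ne_univ w hE
  have : w.1.card < Fintype.card (Fin (n+1)) :=
    Finset.card_lt_card ⟨Finset.subset_univ _, fun h => hj (h (Finset.mem_univ j))⟩
  rw [hflat2 w.1 w.2.1 hw, Fintype.card_fin] at this
  omega

end Aux4
noncomputable section Aux5
open scoped Classical
set_option linter.unusedSectionVars false

open MvPolynomial in
lemma chowMk_incomp {n : ℕ} {M : Matroid (Fin (n + 1))} (v w : ChowVar M)
    (h1 : ¬ v.1 ⊆ w.1) (h2 : ¬ w.1 ⊆ v.1) :
    chowMk M (X v * X w) = 0 := by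
  have : chowMk M (X v * X w) = Ideal.Quotient.mk (chowIdeal M) (X v * X w) := rfl
  rw [this, Ideal.Quotient.eq_zero_iff_mem]
  exact Ideal.subset_span (Or.inl ⟨v, w, h1, h2, rfl⟩)

open MvPolynomial in
lemma deg_flag {n : ℕ} {M : Matroid (Fin (n + 1))} {degM : ChowRing M →ₗ[ℚ] ℚ}
    (hdeg : IsDegreeFunctional M 2 degM) (v w : ChowVar M) (h : v.1 ⊂ w.1) :
    degM (chowMk M (X v * X w)) = 1 := by
  have hprod : (∏ i, X (R := ℚ) (![v, w] i)) = X v * X w := by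
    rw [Fin.prod_univ_two]; rfl
  rw [← hprod]
  refine hdeg.flag ![v, w] ?_
  intro i j hij
  fin_cases i <;> fin_cases j <;> first
    | exact absurd hij (by decide)
    | exact h

open MvPolynomial in
lemma deg_rel {n : ℕ} {M : Matroid (Fin (n + 1))} (hE : M.E = Set.univ)
    (degM : ChowRing M →ₗ[ℚ] ℚ) (v : ChowVar M) (i j : Fin (n + 1)) :
    ∑ w : ChowVar M, (if i ∈ w.1 then degM (chowMk M (X v * X w)) else 0)
      = ∑ w : ChowVar M, (if j ∈ w.1 then degM (chowMk M (X v * X w)) else 0) := by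
  have hmem : (∑ F : ChowVar M, if i ∈ F.1 then X (R := ℚ) F else 0)
      - (∑ F : ChowVar M, if j ∈ F.1 then X F else 0) ∈ chowIdeal M :=
    Ideal.subset_span (Or.inr ⟨i, by rw [hE]; trivial, j, by rw [hE]; trivial, rfl⟩)
  have hmul := (chowIdeal M).mul_mem_left (X v) hmem
  have h0 : chowMk M (X v * ((∑ F : ChowVar M, if i ∈ F.1 then X (R := ℚ) F else 0)
      - (∑ F : ChowVar M, if j ∈ F.1 then X F else 0))) = 0 := by
    have : chowMk M (X v * ((∑ F : ChowVar M, if i ∈ F.1 then X (R := ℚ) F else 0)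
        - (∑ F : ChowVar M, if j ∈ F.1 then X F else 0)))
        = Ideal.Quotient.mk (chowIdeal M) _ := rfl
    rw [this, Ideal.Quotient.eq_zero_iff_mem]
    exact hmul
  have expand : ∀ c : Fin (n + 1),
      degM (chowMk M (X v * (∑ F : ChowVar M, if c ∈ F.1 then X (R := ℚ) F else 0)))
      = ∑ w : ChowVar M, (if c ∈ w.1 then degM (chowMk M (X v * X w)) else 0) := by
    intro c
    rw [Finset.mul_sum, map_sum, map_sum]
    refine Finset.sum_congr rfl fun w _ => ?_
    by_cases hc : c ∈ w.1 <;> simp [hc]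
  have := congrArg degM h0
  rw [mul_sub, map_sub, map_sub, map_zero, expand, expand, sub_eq_zero] at this
  exact this

end Aux5
noncomputable section Aux6
open scoped Classical
open MvPolynomial
set_option linter.unusedSectionVars false

variable {n : ℕ} {M : Matroid (Fin (n + 1))} {n1 n2 : ℕ} {degM : ChowRing M →ₗ[ℚ] ℚ}

/-- distinct flats of the same cardinality are incomparable -/
lemma chowMk_eq_zero_same_card (v w : ChowVar M) (hne : v ≠ w)
    (hcard : v.1.card = w.1.card) : chowMk M (X v * X w) = 0 := by
  refine chowMk_incomp v w ?_ ?_ <;> intro hsub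
  · exact hne (Subtype.ext (Finset.eq_of_subset_of_card_le hsub (le_of_eq hcard.symm)))
  · exact hne (Subtype.ext (Finset.eq_of_subset_of_card_le hsub (le_of_eq hcard)).symm)

section Main
variable (hE : M.E = Set.univ) (hM : Loopless M) (hrk : mrank M M.E = 3)
  (h12 : n1 < n2)
  (hflat1 : ∀ F : Finset (Fin (n + 1)), M.IsFlat ↑F → mrank M ↑F = 1 → F.card = n1)
  (hflat2 : ∀ F : Finset (Fin (n + 1)), M.IsFlat ↑F → mrank M ↑F = 2 → F.card = n2)
  (hdeg : IsDegreeFunctional M 2 degM)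

include hE hM hrk h12 hflat1 hflat2 hdeg

lemma degD_pl {v w : ChowVar M} (hv : mrank M ↑v.1 = 1) (hw : mrank M ↑w.1 = 2) :
    degM (chowMk M (X v * X w)) = if v.1 ⊆ w.1 then 1 else 0 := by
  have hcv := hflat1 v.1 v.2.1 hv
  have hcw := hflat2 w.1 w.2.1 hw
  by_cases hsub : v.1 ⊆ w.1
  · rw [if_pos hsub]
    refine deg_flag hdeg v w ⟨hsub, fun hws => ?_⟩
    have := Finset.card_le_card hws
    omega
  · rw [if_neg hsub]
    rw [chowMk_incomp v w hsub (fun hws => hsub ?_), map_zero]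
    have := Finset.card_le_card hws
    omega

lemma degD_sum_split (f : ChowVar M → ℚ) :
    ∑ w : ChowVar M, f w
      = (∑ w ∈ Finset.univ.filter (fun w : ChowVar M => mrank M ↑w.1 = 1), f w)
      + (∑ w ∈ Finset.univ.filter (fun w : ChowVar M => mrank M ↑w.1 = 2), f w) := by
  rw [← Finset.sum_filter_add_sum_filter_not Finset.univ
    (fun w : ChowVar M => mrank M ↑w.1 = 1) f]
  congr 1
  apply Finset.sum_congr _ (fun _ _ => rfl)
  apply Finset.filter_congr
  intro w _
  rcases chowvar_rank hE hM hrk w with h | h <;> simp [h]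

lemma degD_pp {v : ChowVar M} (hv : mrank M ↑v.1 = 1) :
    degM (chowMk M (X v * X v)) = 1 -
      ((Finset.univ.filter (fun w : ChowVar M => mrank M ↑w.1 = 2 ∧ v.1 ⊆ w.1)).card : ℚ) := by
  obtain ⟨i, hi⟩ := v.2.2.1
  obtain ⟨j, hj⟩ := chowvar_ne_univ v hE
  have rel := deg_rel hE degM v i j
  rw [degD_sum_split hE hM hrk h12 hflat1 hflat2 hdeg, degD_sum_split hE hM hrk h12 hflat1 hflat2 hdeg] at rel
  -- LHS points sum = D v v
  have e1 : (∑ w ∈ Finset.univ.filter (fun w : ChowVar M => mrank M ↑w.1 = 1),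
      if i ∈ w.1 then degM (chowMk M (X v * X w)) else 0) = degM (chowMk M (X v * X v)) := by
    refine Finset.sum_eq_single_of_mem v (by simp [hv]) ?_ |>.trans (if_pos hi)
    intro w hw hne
    rcases Finset.mem_filter.mp hw with ⟨-, hw1⟩
    by_cases hiw : i ∈ w.1
    · exact absurd (point_unique hE hM hw1 hv hiw hi) hne
    · exact if_neg hiw
  -- LHS lines sum = number of lines through v
  have e2 : (∑ w ∈ Finset.univ.filter (fun w : ChowVar M => mrank M ↑w.1 = 2),
      if i ∈ w.1 then degM (chowMk M (X v * X w)) else 0)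
      = ((Finset.univ.filter (fun w : ChowVar M => mrank M ↑w.1 = 2 ∧ v.1 ⊆ w.1)).card : ℚ) := by
    rw [← Finset.filter_filter, ← Finset.sum_boole]
    refine Finset.sum_congr rfl fun w hw => ?_
    rcases Finset.mem_filter.mp hw with ⟨-, hw2⟩
    by_cases hiw : i ∈ w.1
    · have hsub := point_subset_line hE hM hv hi hiw
      rw [if_pos hiw, if_pos hsub, degD_pl hE hM hrk h12 hflat1 hflat2 hdeg hv hw2, if_pos hsub]
    · rw [if_neg hiw, if_neg (fun hsub => hiw (hsub hi))]
  -- RHS points sum = 0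
  have e3 : (∑ w ∈ Finset.univ.filter (fun w : ChowVar M => mrank M ↑w.1 = 1),
      if j ∈ w.1 then degM (chowMk M (X v * X w)) else 0) = 0 := by
    refine Finset.sum_eq_zero fun w hw => ?_
    rcases Finset.mem_filter.mp hw with ⟨-, hw1⟩
    by_cases hjw : j ∈ w.1
    · rw [if_pos hjw, chowMk_eq_zero_same_card v w (fun h => hj (h ▸ hjw))
        (by rw [hflat1 v.1 v.2.1 hv, hflat1 w.1 w.2.1 hw1]), map_zero]
    · exact if_neg hjw
  -- RHS lines sum = 1
  have e4 : (∑ w ∈ Finset.univ.filter (fun w : ChowVar M => mrank M ↑w.1 = 2),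
      if j ∈ w.1 then degM (chowMk M (X v * X w)) else 0) = 1 := by
    have : (∑ w ∈ Finset.univ.filter (fun w : ChowVar M => mrank M ↑w.1 = 2),
        if j ∈ w.1 then degM (chowMk M (X v * X w)) else 0)
        = ∑ w ∈ Finset.univ.filter (fun w : ChowVar M => mrank M ↑w.1 = 2),
          (if v.1 ⊆ w.1 ∧ j ∈ w.1 then (1:ℚ) else 0) := by
      refine Finset.sum_congr rfl fun w hw => ?_
      rcases Finset.mem_filter.mp hw with ⟨-, hw2⟩
      by_cases hjw : j ∈ w.1
      · rw [if_pos hjw, degD_pl hE hM hrk h12 hflat1 hflat2 hdeg hv hw2]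
        by_cases hsub : v.1 ⊆ w.1
        · rw [if_pos hsub, if_pos ⟨hsub, hjw⟩]
        · rw [if_neg hsub, if_neg (fun h => hsub h.1)]
      · rw [if_neg hjw, if_neg (fun h => hjw h.2)]
    rw [this, Finset.sum_boole, Finset.filter_filter]
    have hcongr : Finset.univ.filter
        (fun w : ChowVar M => mrank M ↑w.1 = 2 ∧ (v.1 ⊆ w.1 ∧ j ∈ w.1))
        = Finset.univ.filter
        (fun w : ChowVar M => (mrank M ↑w.1 = 2 ∧ v.1 ⊆ w.1) ∧ j ∈ w.1) := by
      apply Finset.filter_congr; intro w _; tauto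
    rw [hcongr, card_lines_through hE hM hrk hv hj]
    norm_num
  rw [e1, e2, e3, e4] at rel
  linarith

lemma degD_ll {w : ChowVar M} (hw : mrank M ↑w.1 = 2) :
    degM (chowMk M (X w * X w)) = -1 := by
  obtain ⟨i, hi⟩ := w.2.2.1
  obtain ⟨j, hj⟩ := chowvar_ne_univ w hE
  have rel := deg_rel hE degM w i j
  rw [degD_sum_split hE hM hrk h12 hflat1 hflat2 hdeg, degD_sum_split hE hM hrk h12 hflat1 hflat2 hdeg] at rel
  have e1 : (∑ v ∈ Finset.univ.filter (fun v : ChowVar M => mrank M ↑v.1 = 1),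
      if i ∈ v.1 then degM (chowMk M (X w * X v)) else 0) = 1 := by
    have : (∑ v ∈ Finset.univ.filter (fun v : ChowVar M => mrank M ↑v.1 = 1),
        if i ∈ v.1 then degM (chowMk M (X w * X v)) else 0)
        = ∑ v ∈ Finset.univ.filter (fun v : ChowVar M => mrank M ↑v.1 = 1),
          (if i ∈ v.1 then (1:ℚ) else 0) := by
      refine Finset.sum_congr rfl fun v hv => ?_
      rcases Finset.mem_filter.mp hv with ⟨-, hv1⟩
      by_cases hiv : i ∈ v.1
      · rw [if_pos hiv, if_pos hiv, mul_comm,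
          degD_pl hE hM hrk h12 hflat1 hflat2 hdeg hv1 hw,
          if_pos (point_subset_line hE hM hv1 hiv hi)]
      · rw [if_neg hiv, if_neg hiv]
    rw [this, Finset.sum_boole, Finset.filter_filter, card_points_through hE hM hrk i]
    norm_num
  have e2 : (∑ w' ∈ Finset.univ.filter (fun w' : ChowVar M => mrank M ↑w'.1 = 2),
      if i ∈ w'.1 then degM (chowMk M (X w * X w')) else 0)
      = degM (chowMk M (X w * X w)) := by
    refine Finset.sum_eq_single_of_mem w (by simp [hw]) ?_ |>.trans (if_pos hi)
    intro w' hw' hne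
    rcases Finset.mem_filter.mp hw' with ⟨-, hw'2⟩
    by_cases hiw : i ∈ w'.1
    · rw [if_pos hiw, chowMk_eq_zero_same_card w w' (fun h => hne h.symm)
        (by rw [hflat2 w.1 w.2.1 hw, hflat2 w'.1 w'.2.1 hw'2]), map_zero]
    · exact if_neg hiw
  have e3 : (∑ v ∈ Finset.univ.filter (fun v : ChowVar M => mrank M ↑v.1 = 1),
      if j ∈ v.1 then degM (chowMk M (X w * X v)) else 0) = 0 := by
    refine Finset.sum_eq_zero fun v hv => ?_
    rcases Finset.mem_filter.mp hv with ⟨-, hv1⟩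
    by_cases hjv : j ∈ v.1
    · rw [if_pos hjv, chowMk_incomp w v
        (fun hsub => by
          have := Finset.card_le_card hsub
          rw [hflat2 w.1 w.2.1 hw, hflat1 v.1 v.2.1 hv1] at this
          omega)
        (fun hsub => hj (hsub hjv)), map_zero]
    · exact if_neg hjv
  have e4 : (∑ w' ∈ Finset.univ.filter (fun w' : ChowVar M => mrank M ↑w'.1 = 2),
      if j ∈ w'.1 then degM (chowMk M (X w * X w')) else 0) = 0 := by
    refine Finset.sum_eq_zero fun w' hw' => ?_
    rcases Finset.mem_filter.mp hw' with ⟨-, hw'2⟩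
    by_cases hjw : j ∈ w'.1
    · rw [if_pos hjw, chowMk_eq_zero_same_card w w' (fun h => hj (h ▸ hjw))
        (by rw [hflat2 w.1 w.2.1 hw, hflat2 w'.1 w'.2.1 hw'2]), map_zero]
    · exact if_neg hjw
  rw [e1, e2, e3, e4] at rel
  linarith

end Main
end Aux6
noncomputable section Aux7
open scoped Classical
open MvPolynomial
set_option linter.unusedSectionVars false

variable {n : ℕ} {M : Matroid (Fin (n + 1))} {n1 n2 : ℕ} {degM : ChowRing M →ₗ[ℚ] ℚ}

lemma deg_expand (degM : ChowRing M →ₗ[ℚ] ℚ) (c d : ChowVar M → ℚ) :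
    degM (chowMk M ((∑ v : ChowVar M, c v • X v) * (∑ w : ChowVar M, d w • X w)))
      = ∑ v : ChowVar M, ∑ w : ChowVar M, c v * d w * degM (chowMk M (X v * X w)) := by
  rw [Finset.sum_mul_sum]
  rw [map_sum, map_sum]
  refine Finset.sum_congr rfl fun v _ => ?_
  rw [map_sum, map_sum]
  refine Finset.sum_congr rfl fun w _ => ?_
  rw [smul_mul_smul_comm, map_smul, map_smul, smul_eq_mul]

section Main
variable (hE : M.E = Set.univ) (hM : Loopless M) (hrk : mrank M M.E = 3)
  (h12 : n1 < n2)
  (hflat1 : ∀ F : Finset (Fin (n + 1)), M.IsFlat ↑F → mrank M ↑F = 1 → F.card = n1)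
  (hflat2 : ∀ F : Finset (Fin (n + 1)), M.IsFlat ↑F → mrank M ↑F = 2 → F.card = n2)
  (hdeg : IsDegreeFunctional M 2 degM)

include hE hM hrk h12 hflat1 hflat2 hdeg

lemma deg_gamma_prod (c d : ChowVar M → ℚ) (cp cl dp dl : ℚ)
    (hc1 : ∀ v : ChowVar M, mrank M ↑v.1 = 1 → c v = cp)
    (hc2 : ∀ v : ChowVar M, mrank M ↑v.1 = 2 → c v = cl)
    (hd1 : ∀ v : ChowVar M, mrank M ↑v.1 = 1 → d v = dp)
    (hd2 : ∀ v : ChowVar M, mrank M ↑v.1 = 2 → d v = dl) :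
    degM (chowMk M ((∑ v : ChowVar M, c v • X v) * (∑ w : ChowVar M, d w • X w)))
      = cp * dp * (((Finset.univ.filter (fun v : ChowVar M => mrank M ↑v.1 = 1)).card : ℚ)
          - ((∑ v ∈ Finset.univ.filter (fun v : ChowVar M => mrank M ↑v.1 = 1),
              ((Finset.univ.filter
                (fun w : ChowVar M => mrank M ↑w.1 = 2 ∧ v.1 ⊆ w.1)).card : ℚ))))
        + (cp * dl + cl * dp)
          * (∑ v ∈ Finset.univ.filter (fun v : ChowVar M => mrank M ↑v.1 = 1),
              ((Finset.univ.filter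
                (fun w : ChowVar M => mrank M ↑w.1 = 2 ∧ v.1 ⊆ w.1)).card : ℚ))
        - cl * dl * ((Finset.univ.filter (fun v : ChowVar M => mrank M ↑v.1 = 2)).card : ℚ) := by
  classical
  set pts := Finset.univ.filter (fun v : ChowVar M => mrank M ↑v.1 = 1) with hpts
  set lns := Finset.univ.filter (fun v : ChowVar M => mrank M ↑v.1 = 2) with hlns
  set Iq := ∑ v ∈ pts, ((Finset.univ.filter
      (fun w : ChowVar M => mrank M ↑w.1 = 2 ∧ v.1 ⊆ w.1)).card : ℚ) with hIq
  rw [deg_expand]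
  rw [degD_sum_split hE hM hrk h12 hflat1 hflat2 hdeg]
  have inner_split : ∀ v : ChowVar M,
      (∑ w : ChowVar M, c v * d w * degM (chowMk M (X v * X w)))
      = (∑ w ∈ pts, c v * d w * degM (chowMk M (X v * X w)))
        + (∑ w ∈ lns, c v * d w * degM (chowMk M (X v * X w))) :=
    fun v => degD_sum_split hE hM hrk h12 hflat1 hflat2 hdeg _
  -- four blocks
  have Bpp : (∑ v ∈ pts, ∑ w ∈ pts, c v * d w * degM (chowMk M (X v * X w)))
      = cp * dp * ((pts.card : ℚ) - Iq) := by
    have step : ∀ v ∈ pts, (∑ w ∈ pts, c v * d w * degM (chowMk M (X v * X w)))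
        = cp * dp * (1 - ((Finset.univ.filter
            (fun w : ChowVar M => mrank M ↑w.1 = 2 ∧ v.1 ⊆ w.1)).card : ℚ)) := by
      intro v hv
      rcases Finset.mem_filter.mp hv with ⟨-, hv1⟩
      rw [Finset.sum_eq_single_of_mem v hv]
      · rw [degD_pp hE hM hrk h12 hflat1 hflat2 hdeg hv1, hc1 v hv1, hd1 v hv1]
      · intro w hw hne
        rcases Finset.mem_filter.mp hw with ⟨-, hw1⟩
        rw [chowMk_eq_zero_same_card v w (fun h => hne h.symm)
          (by rw [hflat1 v.1 v.2.1 hv1, hflat1 w.1 w.2.1 hw1]), map_zero, mul_zero]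
    rw [Finset.sum_congr rfl step, ← Finset.mul_sum, Finset.sum_sub_distrib,
      Finset.sum_const, ← hIq]
    rw [nsmul_eq_mul, mul_one]
  have Bpl : (∑ v ∈ pts, ∑ w ∈ lns, c v * d w * degM (chowMk M (X v * X w)))
      = cp * dl * Iq := by
    have step : ∀ v ∈ pts, (∑ w ∈ lns, c v * d w * degM (chowMk M (X v * X w)))
        = cp * dl * ((Finset.univ.filter
            (fun w : ChowVar M => mrank M ↑w.1 = 2 ∧ v.1 ⊆ w.1)).card : ℚ) := by
      intro v hv
      rcases Finset.mem_filter.mp hv with ⟨-, hv1⟩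
      have : ∀ w ∈ lns, c v * d w * degM (chowMk M (X v * X w))
          = cp * dl * (if v.1 ⊆ w.1 then (1:ℚ) else 0) := by
        intro w hw
        rcases Finset.mem_filter.mp hw with ⟨-, hw2⟩
        rw [hc1 v hv1, hd2 w hw2, degD_pl hE hM hrk h12 hflat1 hflat2 hdeg hv1 hw2]
      rw [Finset.sum_congr rfl this, ← Finset.mul_sum, Finset.sum_boole, hlns,
        Finset.filter_filter]
    rw [Finset.sum_congr rfl step, ← Finset.mul_sum, ← hIq]
  have Blp : (∑ v ∈ lns, ∑ w ∈ pts, c v * d w * degM (chowMk M (X v * X w)))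
      = cl * dp * Iq := by
    have step : ∀ v ∈ lns, (∑ w ∈ pts, c v * d w * degM (chowMk M (X v * X w)))
        = cl * dp * ((Finset.univ.filter
            (fun w : ChowVar M => mrank M ↑w.1 = 1 ∧ w.1 ⊆ v.1)).card : ℚ) := by
      intro v hv
      rcases Finset.mem_filter.mp hv with ⟨-, hv2⟩
      have : ∀ w ∈ pts, c v * d w * degM (chowMk M (X v * X w))
          = cl * dp * (if w.1 ⊆ v.1 then (1:ℚ) else 0) := by
        intro w hw
        rcases Finset.mem_filter.mp hw with ⟨-, hw1⟩
        rw [hc2 v hv2, hd1 w hw1, mul_comm (X v),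
          degD_pl hE hM hrk h12 hflat1 hflat2 hdeg hw1 hv2]
      rw [Finset.sum_congr rfl this, ← Finset.mul_sum, Finset.sum_boole, hpts,
        Finset.filter_filter]
    rw [Finset.sum_congr rfl step, ← Finset.mul_sum]
    congr 1
    -- double counting swap
    have swap := sum_filter_card
      (Finset.univ.filter (fun v : ChowVar M => mrank M ↑v.1 = 1))
      (Finset.univ.filter (fun w : ChowVar M => mrank M ↑w.1 = 2))
      (fun v w => v.1 ⊆ w.1)
    have cast1 : Iq = ((∑ v ∈ pts, (Finset.univ.filter
        (fun w : ChowVar M => mrank M ↑w.1 = 2 ∧ v.1 ⊆ w.1)).card : ℕ) : ℚ) := by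
      rw [hIq]; push_cast; rfl
    have cast2 : (∑ v ∈ lns, ((Finset.univ.filter
        (fun w : ChowVar M => mrank M ↑w.1 = 1 ∧ w.1 ⊆ v.1)).card : ℚ))
        = ((∑ v ∈ lns, (Finset.univ.filter
        (fun w : ChowVar M => mrank M ↑w.1 = 1 ∧ w.1 ⊆ v.1)).card : ℕ) : ℚ) := by
      push_cast; rfl
    rw [cast1, cast2]
    congr 1
    have lhs_eq : ∀ v : ChowVar M,
        ((Finset.univ.filter (fun w : ChowVar M => mrank M ↑w.1 = 2)).filter
          (fun w => v.1 ⊆ w.1))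
        = Finset.univ.filter (fun w : ChowVar M => mrank M ↑w.1 = 2 ∧ v.1 ⊆ w.1) := by
      intro v; rw [Finset.filter_filter]
    have rhs_eq : ∀ w : ChowVar M,
        ((Finset.univ.filter (fun v : ChowVar M => mrank M ↑v.1 = 1)).filter
          (fun v => v.1 ⊆ w.1))
        = Finset.univ.filter (fun v : ChowVar M => mrank M ↑v.1 = 1 ∧ v.1 ⊆ w.1) := by
      intro w; rw [Finset.filter_filter]
    simp only [lhs_eq, rhs_eq] at swap
    rw [swap]
  have Bll : (∑ v ∈ lns, ∑ w ∈ lns, c v * d w * degM (chowMk M (X v * X w)))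
      = - (cl * dl * (lns.card : ℚ)) := by
    have step : ∀ v ∈ lns, (∑ w ∈ lns, c v * d w * degM (chowMk M (X v * X w)))
        = - (cl * dl) := by
      intro v hv
      rcases Finset.mem_filter.mp hv with ⟨-, hv2⟩
      rw [Finset.sum_eq_single_of_mem v hv]
      · rw [degD_ll hE hM hrk h12 hflat1 hflat2 hdeg hv2, hc2 v hv2, hd2 v hv2]; ring
      · intro w hw hne
        rcases Finset.mem_filter.mp hw with ⟨-, hw2⟩
        rw [chowMk_eq_zero_same_card v w (fun h => hne h.symm)
          (by rw [hflat2 v.1 v.2.1 hv2, hflat2 w.1 w.2.1 hw2]), map_zero, mul_zero]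
    rw [Finset.sum_congr rfl step, Finset.sum_const, nsmul_eq_mul]
    ring
  rw [Finset.sum_congr rfl (fun v _ => inner_split v), Finset.sum_add_distrib, Bpp, Bpl,
    Finset.sum_congr rfl (fun v _ => inner_split v), Finset.sum_add_distrib, Blp, Bll]
  ring

end Main
end Aux7
noncomputable section Aux8
open scoped Classical
open MvPolynomial
set_option linter.unusedSectionVars false

variable {n : ℕ} {M : Matroid (Fin (n + 1))} {n1 n2 : ℕ}

lemma count_swap (hE : M.E = Set.univ) (hM : Loopless M) (hrk : mrank M M.E = 3) :
    (∑ w ∈ Finset.univ.filter (fun w : ChowVar M => mrank M ↑w.1 = 2),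
      (Finset.univ.filter (fun v : ChowVar M => mrank M ↑v.1 = 1 ∧ v.1 ⊆ w.1)).card)
    = ∑ v ∈ Finset.univ.filter (fun v : ChowVar M => mrank M ↑v.1 = 1),
      (Finset.univ.filter (fun w : ChowVar M => mrank M ↑w.1 = 2 ∧ v.1 ⊆ w.1)).card := by
  have swap := sum_filter_card
    (Finset.univ.filter (fun v : ChowVar M => mrank M ↑v.1 = 1))
    (Finset.univ.filter (fun w : ChowVar M => mrank M ↑w.1 = 2))
    (fun v w => v.1 ⊆ w.1)
  simp only [Finset.filter_filter] at swap
  rw [← swap]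

lemma gammaPoly_eq (hE : M.E = Set.univ) (k : ℕ) (hk1 : 1 ≤ k) (hk2 : k ≤ n) :
    gammaPoly M (k : ℤ) = ∑ F : ChowVar M,
      (min (F.1.card : ℚ) (k : ℚ) - (k : ℚ) * (F.1.card : ℚ) / ((n : ℚ) + 1)) • X F := by
  have hNcard : M.E.ncard = n + 1 := by
    rw [hE, Set.ncard_univ, Nat.card_eq_fintype_card, Fintype.card_fin]
  rw [gammaPoly, if_pos]
  · simp only [hNcard, Int.cast_natCast]
    push_cast
    rfl
  · rw [hNcard]
    constructor <;> omega

end Aux8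

noncomputable section

/-- Let `M` be a rank-3 perfect matroid design on `E` where every
rank-1 flat has `n_1` elements and every rank-2 flat has `n_2` elements.  Then
`deg_M(γ_{n_1}²) = (n+1-n_1)(n+1-n_2)·n_1/n_2`,
`deg_M(γ_{n_1}·γ_{n_2}) = (n+1-n_1)(n+1-n_2)`, and
`deg_M(γ_{n_2}²) = (n+1-n_2)²`. -/
theorem stmt15 {n : ℕ} (M : Matroid (Fin (n + 1))) (hE : M.E = Set.univ)
    (hM : Loopless M) (hrk : mrank M M.E = 3)
    (degM : ChowRing M →ₗ[ℚ] ℚ) (hdeg : IsDegreeFunctional M 2 degM)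
    (n1 n2 : ℕ) (h1 : 1 ≤ n1) (h12 : n1 < n2)
    (hflat1 : ∀ F : Finset (Fin (n + 1)), M.IsFlat ↑F → mrank M ↑F = 1 → F.card = n1)
    (hflat2 : ∀ F : Finset (Fin (n + 1)), M.IsFlat ↑F → mrank M ↑F = 2 → F.card = n2) :
    degM (gamma M n1 ^ 2) =
        ((n : ℚ) + 1 - n1) * ((n : ℚ) + 1 - n2) * (n1 : ℚ) / (n2 : ℚ) ∧
    degM (gamma M n1 * gamma M n2) = ((n : ℚ) + 1 - n1) * ((n : ℚ) + 1 - n2) ∧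
    degM (gamma M n2 ^ 2) = ((n : ℚ) + 1 - n2) ^ 2 := by
  classical
  have hn2n : n2 ≤ n := n2_le_n hE hM hrk hflat2
  set c1f : ChowVar M → ℚ := fun F =>
    min (F.1.card : ℚ) (n1 : ℚ) - (n1 : ℚ) * (F.1.card : ℚ) / ((n : ℚ) + 1) with hc1f
  set c2f : ChowVar M → ℚ := fun F =>
    min (F.1.card : ℚ) (n2 : ℚ) - (n2 : ℚ) * (F.1.card : ℚ) / ((n : ℚ) + 1) with hc2f
  have hgp1 : gammaPoly M (n1 : ℤ) = ∑ F : ChowVar M, c1f F • MvPolynomial.X F :=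
    gammaPoly_eq hE n1 h1 (by omega)
  have hgp2 : gammaPoly M (n2 : ℤ) = ∑ F : ChowVar M, c2f F • MvPolynomial.X F :=
    gammaPoly_eq hE n2 (by omega) hn2n
  have hc1p : ∀ v : ChowVar M, mrank M ↑v.1 = 1 →
      c1f v = (n1 : ℚ) - (n1 : ℚ) * (n1 : ℚ) / ((n : ℚ) + 1) := by
    intro v hv; rw [hc1f]; simp only [hflat1 v.1 v.2.1 hv, min_self]
  have hc1l : ∀ v : ChowVar M, mrank M ↑v.1 = 2 →
      c1f v = (n1 : ℚ) - (n1 : ℚ) * (n2 : ℚ) / ((n : ℚ) + 1) := by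
    intro v hv; rw [hc1f]
    simp only [hflat2 v.1 v.2.1 hv]
    rw [min_eq_right (by exact_mod_cast h12.le)]
  have hc2p : ∀ v : ChowVar M, mrank M ↑v.1 = 1 →
      c2f v = (n1 : ℚ) - (n2 : ℚ) * (n1 : ℚ) / ((n : ℚ) + 1) := by
    intro v hv; rw [hc2f]
    simp only [hflat1 v.1 v.2.1 hv]
    rw [min_eq_left (by exact_mod_cast h12.le)]
  have hc2l : ∀ v : ChowVar M, mrank M ↑v.1 = 2 →
      c2f v = (n2 : ℚ) - (n2 : ℚ) * (n2 : ℚ) / ((n : ℚ) + 1) := by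
    intro v hv; rw [hc2f]; simp only [hflat2 v.1 v.2.1 hv, min_self]
  -- scalar relations over ℕ
  have hP : (Finset.univ.filter (fun v : ChowVar M => mrank M ↑v.1 = 1)).card * n1 = n + 1 :=
    count_NP hE hM hrk hflat1
  have hIrel : (∑ v ∈ Finset.univ.filter (fun v : ChowVar M => mrank M ↑v.1 = 1),
        (Finset.univ.filter (fun w : ChowVar M => mrank M ↑w.1 = 2 ∧ v.1 ⊆ w.1)).card)
        * (n2 - n1)
      = (Finset.univ.filter (fun v : ChowVar M => mrank M ↑v.1 = 1)).card
        * ((n + 1) - n1) := by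
    rw [Finset.sum_mul, Finset.sum_congr rfl (fun v hv =>
      count_NLthru hE hM hrk hflat1 hflat2 (Finset.mem_filter.mp hv).2),
      Finset.sum_const, smul_eq_mul]
  have hQrel : (∑ v ∈ Finset.univ.filter (fun v : ChowVar M => mrank M ↑v.1 = 1),
        (Finset.univ.filter (fun w : ChowVar M => mrank M ↑w.1 = 2 ∧ v.1 ⊆ w.1)).card) * n1
      = (Finset.univ.filter (fun v : ChowVar M => mrank M ↑v.1 = 2)).card * n2 := by
    rw [← count_swap hE hM hrk, Finset.sum_mul, Finset.sum_congr rfl (fun w hw =>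
      count_NLin hE hM hrk hflat1 hflat2 (Finset.mem_filter.mp hw).2),
      Finset.sum_const, smul_eq_mul]
  set P : ℕ := (Finset.univ.filter (fun v : ChowVar M => mrank M ↑v.1 = 1)).card with hPdef
  set Q : ℕ := (Finset.univ.filter (fun v : ChowVar M => mrank M ↑v.1 = 2)).card with hQdef
  set In : ℕ := ∑ v ∈ Finset.univ.filter (fun v : ChowVar M => mrank M ↑v.1 = 1),
      (Finset.univ.filter (fun w : ChowVar M => mrank M ↑w.1 = 2 ∧ v.1 ⊆ w.1)).card
    with hIdef
  have hIq : (∑ v ∈ Finset.univ.filter (fun v : ChowVar M => mrank M ↑v.1 = 1),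
      ((Finset.univ.filter (fun w : ChowVar M => mrank M ↑w.1 = 2 ∧ v.1 ⊆ w.1)).card : ℚ))
      = (In : ℚ) := by
    rw [hIdef]; exact (Nat.cast_sum _ _).symm
  -- cast to ℚ
  have hn1 : (n1 : ℚ) ≠ 0 := Nat.cast_ne_zero.mpr (by omega)
  have hn2 : (n2 : ℚ) ≠ 0 := Nat.cast_ne_zero.mpr (by omega)
  have hdiff : (n2 : ℚ) - (n1 : ℚ) ≠ 0 := by
    have : (n1 : ℚ) < (n2 : ℚ) := by exact_mod_cast h12
    linarith
  have hN : (n : ℚ) + 1 ≠ 0 := by positivity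
  have cP : (P : ℚ) * n1 = (n : ℚ) + 1 := by exact_mod_cast hP
  have cI : (In : ℚ) * ((n2 : ℚ) - n1) = (P : ℚ) * (((n : ℚ) + 1) - n1) := by
    have h' : ((In : ℚ)) * (((n2 - n1 : ℕ)) : ℚ) = (P : ℚ) * (((n + 1 - n1 : ℕ)) : ℚ) := by
      exact_mod_cast hIrel
    rwa [Nat.cast_sub h12.le, Nat.cast_sub (by omega), Nat.cast_add, Nat.cast_one] at h'
  have cQ : (In : ℚ) * n1 = (Q : ℚ) * n2 := by exact_mod_cast hQrel
  have qP : (P : ℚ) = ((n : ℚ) + 1) / n1 := by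
    rw [eq_div_iff hn1]; exact cP
  have qI : (In : ℚ) = ((n : ℚ) + 1) * (((n : ℚ) + 1) - n1) / (n1 * ((n2 : ℚ) - n1)) := by
    rw [eq_div_iff (mul_ne_zero hn1 hdiff)]
    linear_combination (n1 : ℚ) * cI + (((n : ℚ) + 1) - n1) * cP
  have qQ : (Q : ℚ) = ((n : ℚ) + 1) * (((n : ℚ) + 1) - n1) / (n2 * ((n2 : ℚ) - n1)) := by
    rw [eq_div_iff (mul_ne_zero hn2 hdiff)]
    linear_combination (-((n2 : ℚ) - n1)) * cQ + (n1 : ℚ) * cI + (((n : ℚ) + 1) - n1) * cP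
  refine ⟨?_, ?_, ?_⟩
  · have e : gamma M (n1 : ℤ) ^ 2
        = chowMk M ((∑ F : ChowVar M, c1f F • MvPolynomial.X F) * (∑ F : ChowVar M, c1f F • MvPolynomial.X F)) := by
      rw [pow_two, gamma, ← map_mul, hgp1]
    rw [e, deg_gamma_prod hE hM hrk h12 hflat1 hflat2 hdeg c1f c1f _ _ _ _ hc1p hc1l hc1p hc1l,
      hIq, ← hPdef, ← hQdef, qP, qI, qQ]
    field_simp
    ring
  · have e : gamma M (n1 : ℤ) * gamma M (n2 : ℤ)
        = chowMk M ((∑ F : ChowVar M, c1f F • MvPolynomial.X F) * (∑ F : ChowVar M, c2f F • MvPolynomial.X F)) := by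
      rw [gamma, gamma, ← map_mul, hgp1, hgp2]
    rw [e, deg_gamma_prod hE hM hrk h12 hflat1 hflat2 hdeg c1f c2f _ _ _ _ hc1p hc1l hc2p hc2l,
      hIq, ← hPdef, ← hQdef, qP, qI, qQ]
    field_simp
    ring
  · have e : gamma M (n2 : ℤ) ^ 2
        = chowMk M ((∑ F : ChowVar M, c2f F • MvPolynomial.X F) * (∑ F : ChowVar M, c2f F • MvPolynomial.X F)) := by
      rw [pow_two, gamma, ← map_mul, hgp2]
    rw [e, deg_gamma_prod hE hM hrk h12 hflat1 hflat2 hdeg c2f c2f _ _ _ _ hc2p hc2l hc2p hc2l,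
      hIq, ← hPdef, ← hQdef, qP, qI, qQ]
    field_simp
    ring


end
end

section
/- Let M be a perfect matroid design of rank r+1 on E with flat sizes n_1 < n_2 < ⋯ < n_r; set n_0 = 0 and n_{r+1} = n+1. Then for every 1 ≤ i ≤ r the following identity holds in the Chow ring A*(M): (n_{i+1}−n_{i−1})·γ_{n_i}² = (n_i−n_{i−1})·γ_{n_i}·γ_{n_{i+1}} + (n_{i+1}−n_i)·γ_{n_{i−1}}·γ_{n_i}, with the conventions γ_{n_0} = γ_0 = 0 and γ_{n_{r+1}} = γ_{n+1} = 0. -/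
/-!
Common setup: Chow rings of matroids, hypersimplex classes, degree functionals.
The ground set is a finite type `α`; for a matroid `M` on `α` the Chow ring
`A*(M)` is the quotient of the polynomial ring over `ℚ` on variables indexed by
the nonempty proper flats of `M` by the ideal generated by products of
incomparable variables and the linear elements `∑_{F ∋ i} x_F - ∑_{F ∋ j} x_F`.
-/

open scoped Classical

set_option maxHeartbeats 1000000
set_option synthInstance.maxHeartbeats 1000000

noncomputable section

set_option linter.unusedSectionVars false
set_option linter.unusedVariables false

section Rank

variable {α : Type*} [Fintype α] [DecidableEq α]

lemma mrank_bddAbove (M : Matroid α) (X : Set α) :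
    BddAbove {m | ∃ I, M.Indep I ∧ I ⊆ X ∧ I.ncard = m} := by
  refine ⟨Fintype.card α, ?_⟩
  rintro m ⟨I, _, _, rfl⟩
  calc I.ncard ≤ (Set.univ : Set α).ncard :=
        Set.ncard_le_ncard (Set.subset_univ _) (Set.finite_univ)
    _ = Fintype.card α := by simp [Set.ncard_univ]

lemma mrank_mem (M : Matroid α) (X : Set α) :
    ∃ I, M.Indep I ∧ I ⊆ X ∧ I.ncard = mrank M X := by
  have h : mrank M X ∈ {m | ∃ I, M.Indep I ∧ I ⊆ X ∧ I.ncard = m} := by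
    have hne : {m | ∃ I, M.Indep I ∧ I ⊆ X ∧ I.ncard = m}.Nonempty :=
      ⟨0, ∅, M.empty_indep, Set.empty_subset _, by simp⟩
    exact Nat.sSup_mem hne (mrank_bddAbove M X)
  exact h

lemma le_mrank (M : Matroid α) {X I : Set α} (hI : M.Indep I) (hIX : I ⊆ X) :
    I.ncard ≤ mrank M X :=
  le_csSup (mrank_bddAbove M X) ⟨I, hI, hIX, rfl⟩

lemma mrank_pos (M : Matroid α) (hM : Loopless M) {F : Finset α} (hF : ProperFlat M F) :
    1 ≤ mrank M ↑F := by
  obtain ⟨e, he⟩ := hF.2.1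
  have : ({e} : Set α).ncard ≤ mrank M ↑F :=
    le_mrank M (hM e (hF.1.subset_ground (by simpa using he))) (by simpa using he)
  simpa using this

lemma mrank_le_top (M : Matroid α) {X : Set α} (hX : X ⊆ M.E) :
    mrank M X ≤ mrank M M.E := by
  refine csSup_le_csSup (mrank_bddAbove M M.E) ?_ ?_
  · exact ⟨0, ∅, M.empty_indep, Set.empty_subset _, by simp⟩
  · rintro m ⟨I, hI, hIX, rfl⟩
    exact ⟨I, hI, hIX.trans hX, rfl⟩

lemma mrank_lt_top (M : Matroid α) {F : Finset α} (hF : ProperFlat M F) :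
    mrank M ↑F < mrank M M.E := by
  rcases lt_or_eq_of_le (mrank_le_top M hF.1.subset_ground) with h | h
  · exact h
  · exfalso
    obtain ⟨I, hI, hIF, hIcard⟩ := mrank_mem M ↑F
    have hIfin : I.Finite := Set.toFinite I
    have hmax : ∀ J, M.Indep J → I ⊆ J → J ⊆ ↑F → I = J := by
      intro J hJ hIJ hJF
      exact Set.eq_of_subset_of_ncard_le hIJ (hIcard ▸ le_mrank M hJ hJF) (Set.toFinite J)
    have hbF : M.IsBasis I ↑F := by
      rw [Matroid.isBasis_iff hF.1.subset_ground]
      exact ⟨hI, hIF, hmax⟩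
    have hbE : M.IsBasis I M.E := by
      rw [Matroid.isBasis_iff subset_rfl]
      refine ⟨hI, hIF.trans hF.1.subset_ground, ?_⟩
      intro J hJ hIJ hJE
      exact Set.eq_of_subset_of_ncard_le hIJ
        (by rw [hIcard, h]; exact le_mrank M hJ hJE) (Set.toFinite J)
    exact hF.2.2 (subset_antisymm hF.1.subset_ground (hF.1.subset_of_isBasis_of_isBasis hbF hbE))

end Rank

section LemA

variable {α : Type*} [Fintype α] [DecidableEq α]

/-- unconditional polynomial representative of `γ_k` -/
def gp (M : Matroid α) (k : ℕ) : MvPolynomial (ChowVar M) ℚ :=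
  ∑ F : ChowVar M,
    (min (F.1.card : ℚ) (k : ℚ) - (k : ℚ) * (F.1.card : ℚ) / (M.E.ncard : ℚ))
      • MvPolynomial.X F

/-- linear generators -/
def LL (M : Matroid α) (e : α) : MvPolynomial (ChowVar M) ℚ :=
  ∑ G : ChowVar M, if e ∈ G.1 then MvPolynomial.X G else 0

lemma LL_eq (M : Matroid α) (e : α) :
    LL M e = ∑ G : ChowVar M, (if e ∈ G.1 then (1:ℚ) else 0) • MvPolynomial.X G := by
  unfold LL
  refine Finset.sum_congr rfl fun G _ => ?_
  split_ifs <;> simp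

lemma chowVar_card_le (M : Matroid α) (G : ChowVar M) : G.1.card ≤ M.E.ncard := by
  have h := G.2.1.subset_ground
  have := Set.ncard_le_ncard h (Set.toFinite M.E)
  simpa [Set.ncard_coe_finset] using this

lemma gammaPoly_eq_gp (M : Matroid α) (k : ℕ) (hk : k ≤ M.E.ncard) :
    gammaPoly M (k : ℤ) = gp M k := by
  unfold gammaPoly gp
  by_cases h : 1 ≤ (k:ℤ) ∧ (k:ℤ) ≤ (M.E.ncard : ℤ) - 1
  · rw [if_pos h]
    push_cast
    rfl
  · rw [if_neg h]
    rw [eq_comm, Finset.sum_eq_zero]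
    intro G _
    by_cases hNc : M.E.ncard = 0
    · exfalso
      have h1 := chowVar_card_le M G
      have h2 := Finset.card_pos.mpr G.2.2.1
      omega
    rw [not_and_or] at h
    rcases h with h | h
    · -- k = 0
      have hk0 : k = 0 := by omega
      subst hk0
      have : min ((G.1.card : ℚ)) ((0:ℕ):ℚ) = 0 := by
        simp [min_eq_right]
      rw [this]
      simp
    · -- k = ncard
      have hk0 : k = M.E.ncard := by omega
      subst hk0
      have hN : (M.E.ncard : ℚ) ≠ 0 := Nat.cast_ne_zero.mpr hNc
      have hle : (G.1.card : ℚ) ≤ (M.E.ncard : ℚ) := by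
        exact_mod_cast chowVar_card_le M G
      rw [min_eq_left hle, mul_comm, mul_div_assoc, div_self hN]
      simp

lemma gp_mul_X_eq_zero (M : Matroid α) (hE : M.E = Set.univ) (F : ChowVar M) :
    chowMk M (gp M F.1.card * MvPolynomial.X F) = 0 := by
  classical
  obtain ⟨e₀, he₀⟩ := F.2.2.1
  have : Nonempty α := ⟨e₀⟩
  set N : ℚ := (Fintype.card α : ℚ) with hNdef
  have hNE : M.E.ncard = Fintype.card α := by
    rw [hE, Set.ncard_univ, Nat.card_eq_fintype_card]
  have hN0 : N ≠ 0 := by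
    simp only [hNdef, ne_eq, Nat.cast_eq_zero]
    exact Fintype.card_ne_zero
  set k : ℚ := (F.1.card : ℚ) with hkdef
  set q := chowMk M with hq
  have h1 : ∀ G : ChowVar M, ¬ (G.1 ⊆ F.1) → ¬ (F.1 ⊆ G.1) →
      q (MvPolynomial.X G * MvPolynomial.X F) = 0 := by
    intro G hGF hFG
    rw [hq, chowMk, Ideal.Quotient.mkₐ_eq_mk, Ideal.Quotient.eq_zero_iff_mem]
    exact Ideal.subset_span (Or.inl ⟨G, F, hGF, hFG, rfl⟩)
  have h2 : ∀ e f : α, q ((LL M e - LL M f) * MvPolynomial.X F) = 0 := by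
    intro e f
    rw [hq, chowMk, Ideal.Quotient.mkₐ_eq_mk, Ideal.Quotient.eq_zero_iff_mem]
    exact Ideal.mul_mem_right _ _ (Ideal.subset_span (Or.inr ⟨e, by rw [hE]; trivial,
      f, by rw [hE]; trivial, rfl⟩))
  set cc : ChowVar M → ℚ := fun G => min (G.1.card : ℚ) k - k * G.1.card / N with hcc
  set d : ChowVar M → ℚ := fun G => N * ((G.1 ∩ F.1).card : ℚ) - k * G.1.card with hd
  have hgp : gp M F.1.card = ∑ G : ChowVar M, cc G • MvPolynomial.X G := by
    unfold gp
    refine Finset.sum_congr rfl fun G _ => ?_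
    rw [hcc, hNE]
  have hA : ∑ e ∈ F.1, LL M e
      = ∑ G : ChowVar M, ((G.1 ∩ F.1).card : ℚ) • MvPolynomial.X G := by
    simp only [LL_eq]
    rw [Finset.sum_comm]
    refine Finset.sum_congr rfl fun G _ => ?_
    rw [← Finset.sum_smul]
    congr 1
    rw [Finset.sum_boole, Finset.filter_mem_eq_inter, Finset.inter_comm]
  have hB : ∑ f : α, LL M f = ∑ G : ChowVar M, (G.1.card : ℚ) • MvPolynomial.X G := by
    simp only [LL_eq]
    rw [Finset.sum_comm]
    refine Finset.sum_congr rfl fun G _ => ?_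
    rw [← Finset.sum_smul]
    congr 1
    rw [Finset.sum_boole, Finset.filter_mem_eq_inter, Finset.univ_inter]
  have hpoly : (∑ e ∈ F.1, ∑ f : α, (LL M e - LL M f))
      = ∑ G : ChowVar M, d G • MvPolynomial.X G := by
    have inner : ∀ e : α, (∑ f : α, (LL M e - LL M f)) = N • LL M e - ∑ f : α, LL M f := by
      intro e
      rw [Finset.sum_sub_distrib, Finset.sum_const, Finset.card_univ,
        ← Nat.cast_smul_eq_nsmul ℚ, ← hNdef]
    have step1 : (∑ e ∈ F.1, ∑ f : α, (LL M e - LL M f))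
        = N • (∑ e ∈ F.1, LL M e) - k • (∑ f : α, LL M f) := by
      simp only [inner]
      rw [Finset.sum_sub_distrib, ← Finset.smul_sum, Finset.sum_const,
        ← Nat.cast_smul_eq_nsmul ℚ, ← hkdef]
    rw [step1, hA, hB, Finset.smul_sum, Finset.smul_sum, ← Finset.sum_sub_distrib]
    refine Finset.sum_congr rfl fun G _ => ?_
    rw [smul_smul, smul_smul, ← sub_smul]
  -- main computation
  have main : N • q (gp M F.1.card * MvPolynomial.X F) = 0 := by
    have e1 : gp M F.1.card * MvPolynomial.X F
        = ∑ G : ChowVar M, cc G • (MvPolynomial.X G * MvPolynomial.X F) := by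
      rw [hgp, Finset.sum_mul]
      exact Finset.sum_congr rfl fun G _ => smul_mul_assoc _ _ _
    calc N • q (gp M F.1.card * MvPolynomial.X F)
        = ∑ G : ChowVar M, (N * cc G) • q (MvPolynomial.X G * MvPolynomial.X F) := by
          rw [e1, map_sum, Finset.smul_sum]
          exact Finset.sum_congr rfl fun G _ => by rw [map_smul, smul_smul]
      _ = ∑ G : ChowVar M, d G • q (MvPolynomial.X G * MvPolynomial.X F) := by
          refine Finset.sum_congr rfl fun G _ => ?_
          by_cases hGF : G.1 ⊆ F.1
          · congr 1
            have hmin : min (G.1.card : ℚ) k = (G.1.card : ℚ) := by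
              rw [min_eq_left]
              rw [hkdef]
              exact_mod_cast Finset.card_le_card hGF
            simp only [hcc, hd, hmin, Finset.inter_eq_left.mpr hGF]
            field_simp
          by_cases hFG : F.1 ⊆ G.1
          · congr 1
            have hmin : min (G.1.card : ℚ) k = k := by
              rw [min_eq_right]
              rw [hkdef]
              exact_mod_cast Finset.card_le_card hFG
            simp only [hcc, hd, hmin, Finset.inter_eq_right.mpr hFG, ← hkdef]
            field_simp
          · rw [h1 G hGF hFG, smul_zero, smul_zero]
      _ = q (∑ G : ChowVar M, d G • (MvPolynomial.X G * MvPolynomial.X F)) := by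
          rw [map_sum]
          exact Finset.sum_congr rfl fun G _ => by rw [map_smul]
      _ = q ((∑ G : ChowVar M, d G • MvPolynomial.X G) * MvPolynomial.X F) := by
          rw [Finset.sum_mul]
          exact congrArg q (Finset.sum_congr rfl fun G _ => (smul_mul_assoc _ _ _).symm)
      _ = ∑ e ∈ F.1, ∑ f : α, q ((LL M e - LL M f) * MvPolynomial.X F) := by
          rw [← hpoly, Finset.sum_mul, map_sum]
          exact Finset.sum_congr rfl fun e _ => by rw [Finset.sum_mul, map_sum]
      _ = 0 := Finset.sum_eq_zero fun e _ => Finset.sum_eq_zero fun f _ => h2 e f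
  rcases smul_eq_zero.mp main with h | h
  · exact absurd h hN0
  · exact h

end LemA

lemma scalar_id (N x y z m : ℚ) (hN : N ≠ 0)
    (hm : (m ≤ x ∧ x ≤ y ∧ y ≤ z ∧ m ≠ y) ∨ (m = y ∧ x ≤ y ∧ y ≤ z) ∨
          (z ≤ m ∧ x ≤ y ∧ y ≤ z ∧ m ≠ y)) :
    (z - x) * (min m y - y * m / N) =
      (y - x) * (min m z - z * m / N) + (z - y) * (min m x - x * m / N)
      + (y - x) * (z - y) * (if m = y then 1 else 0) := by
  rcases hm with ⟨h1, h2, h3, h4⟩ | ⟨h1, h2, h3⟩ | ⟨h1, h2, h3, h4⟩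
  · rw [if_neg h4, min_eq_left (h1.trans (h2.trans h3)), min_eq_left (h1.trans h2),
      min_eq_left h1]
    field_simp
    ring
  · subst h1
    rw [if_pos rfl, min_self, min_eq_left h3, min_eq_right h2]
    field_simp
    ring
  · rw [if_neg h4, min_eq_right ((h2.trans h3).trans h1), min_eq_right (h3.trans h1),
      min_eq_right h1]
    field_simp
    ring


/-- Let `M` be a perfect matroid design of rank `r + 1` with flat
sizes `n_1 < ⋯ < n_r`; set `n_0 = 0` and `n_{r+1} = n + 1`.  Then for `1 ≤ i ≤ r`,
in `A*(M)`:
`(n_{i+1} - n_{i-1})·γ_{n_i}² = (n_i - n_{i-1})·γ_{n_i}γ_{n_{i+1}} +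
 (n_{i+1} - n_i)·γ_{n_{i-1}}γ_{n_i}`
(with `γ_{n_0} = γ_0 = 0` and `γ_{n_{r+1}} = γ_{n+1} = 0`, which hold by the
convention on `γ`). -/
theorem stmt16 {n r : ℕ} (M : Matroid (Fin (n + 1))) (hE : M.E = Set.univ)
    (hM : Loopless M) (hrk : mrank M M.E = r + 1)
    (nn : ℕ → ℕ) (h0 : nn 0 = 0) (htop : nn (r + 1) = n + 1)
    (hmono : ∀ i, i ≤ r → nn i < nn (i + 1))
    (hflat : ∀ F : Finset (Fin (n + 1)), M.IsFlat ↑F →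
      1 ≤ mrank M ↑F → mrank M ↑F ≤ r → F.card = nn (mrank M ↑F))
    (i : ℕ) (hi1 : 1 ≤ i) (hir : i ≤ r) :
    ((nn (i + 1) : ℚ) - (nn (i - 1) : ℚ)) • gamma M (nn i) ^ 2 =
      ((nn i : ℚ) - (nn (i - 1) : ℚ)) • (gamma M (nn i) * gamma M (nn (i + 1))) +
      ((nn (i + 1) : ℚ) - (nn i : ℚ)) • (gamma M (nn (i - 1)) * gamma M (nn i)) := by
  have hNE : M.E.ncard = n + 1 := by
    rw [hE, Set.ncard_univ, Nat.card_eq_fintype_card, Fintype.card_fin]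
  have hN : ((M.E.ncard : ℚ)) ≠ 0 := by
    rw [hNE]; exact_mod_cast Nat.succ_ne_zero n
  -- monotonicity of nn
  have hlt : ∀ p q, p < q → q ≤ r + 1 → nn p < nn q := by
    intro p q hpq hq
    induction q with
    | zero => omega
    | succ q ih =>
      rcases Nat.lt_succ_iff_lt_or_eq.mp hpq with h | h
      · exact (ih h (by omega)).trans (hmono q (by omega))
      · subst h; exact hmono p (by omega)
  have hle : ∀ p q, p ≤ q → q ≤ r + 1 → nn p ≤ nn q := by
    intro p q hpq hq
    rcases eq_or_lt_of_le hpq with h | h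
    · rw [h]
    · exact (hlt p q h hq).le
  -- every variable's flat has a PMD cardinality
  have hcard : ∀ G : ChowVar M, ∃ j, 1 ≤ j ∧ j ≤ r ∧ G.1.card = nn j := by
    intro G
    have hpos := mrank_pos M hM G.2
    have hltr : mrank M ↑G.1 ≤ r := by
      have := mrank_lt_top M G.2
      omega
    exact ⟨mrank M ↑G.1, hpos, hltr, hflat G.1 G.2.1 hpos hltr⟩
  -- rewrite gammas as images of gp
  have hγ : ∀ j, j ≤ r + 1 → gamma M (nn j) = chowMk M (gp M (nn j)) := by
    intro j hj
    unfold gamma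
    congr 1
    apply gammaPoly_eq_gp
    rw [hNE]
    rcases eq_or_lt_of_le hj with h | h
    · rw [h, htop]
    · have := hlt j (r + 1) h (le_refl _)
      omega
  -- the indicator sum
  set S : MvPolynomial (ChowVar M) ℚ :=
    ∑ G : ChowVar M, (if G.1.card = nn i then MvPolynomial.X G else 0) with hS
  -- lemma B: the coefficientwise identity
  have hBpoly : (((nn (i+1) : ℚ) - (nn (i-1) : ℚ)) • gp M (nn i) : MvPolynomial (ChowVar M) ℚ)
      = ((nn i : ℚ) - (nn (i-1) : ℚ)) • gp M (nn (i+1))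
        + ((nn (i+1) : ℚ) - (nn i : ℚ)) • gp M (nn (i-1))
        + (((nn i : ℚ) - (nn (i-1) : ℚ)) * ((nn (i+1) : ℚ) - (nn i : ℚ))) • S := by
    rw [hS]
    unfold gp
    rw [Finset.smul_sum, Finset.smul_sum, Finset.smul_sum, Finset.smul_sum,
      ← Finset.sum_add_distrib, ← Finset.sum_add_distrib]
    refine Finset.sum_congr rfl fun G _ => ?_
    obtain ⟨j, hj1, hjr, hjcard⟩ := hcard G
    have hite : (if G.1.card = nn i then (MvPolynomial.X G : MvPolynomial (ChowVar M) ℚ) else 0)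
        = (if (G.1.card : ℚ) = (nn i : ℚ) then (1:ℚ) else 0) • MvPolynomial.X G := by
      by_cases h : G.1.card = nn i
      · rw [if_pos h, if_pos (by exact_mod_cast h), one_smul]
      · rw [if_neg h, if_neg (fun hh => h (by exact_mod_cast hh)), zero_smul]
    rw [hite]
    simp only [smul_smul]
    rw [← add_smul, ← add_smul]
    congr 1
    rw [hjcard]
    apply scalar_id _ _ _ _ _ hN
    rcases lt_trichotomy j i with h | h | h
    · left
      refine ⟨?_, ?_, ?_, ?_⟩
      · exact_mod_cast hle j (i-1) (by omega) (by omega)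
      · exact_mod_cast hle (i-1) i (by omega) (by omega)
      · exact_mod_cast hle i (i+1) (by omega) (by omega)
      · exact ne_of_lt (by exact_mod_cast hlt j i h (by omega))
    · right; left
      refine ⟨by rw [h], ?_, ?_⟩
      · exact_mod_cast hle (i-1) i (by omega) (by omega)
      · exact_mod_cast hle i (i+1) (by omega) (by omega)
    · right; right
      refine ⟨?_, ?_, ?_, ?_⟩
      · exact_mod_cast hle (i+1) j (by omega) (by omega)
      · exact_mod_cast hle (i-1) i (by omega) (by omega)
      · exact_mod_cast hle i (i+1) (by omega) (by omega)
      · exact ne_of_gt (by exact_mod_cast hlt i j h (by omega))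
  -- key vanishing
  have key : chowMk M (S * gp M (nn i)) = 0 := by
    rw [hS, Finset.sum_mul, map_sum]
    refine Finset.sum_eq_zero fun G _ => ?_
    by_cases h : G.1.card = nn i
    · rw [if_pos h, ← h, mul_comm]
      exact gp_mul_X_eq_zero M hE G
    · rw [if_neg h, zero_mul, map_zero]
  -- pass to the quotient
  have hq := congrArg (chowMk M) hBpoly
  simp only [map_add, map_smul] at hq
  rw [hγ i (by omega), hγ (i+1) (by omega), hγ (i-1) (by omega)]
  calc ((nn (i+1) : ℚ) - (nn (i-1) : ℚ)) • (chowMk M (gp M (nn i))) ^ 2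
      = (((nn (i+1) : ℚ) - (nn (i-1) : ℚ)) • chowMk M (gp M (nn i))) * chowMk M (gp M (nn i)) := by
        rw [smul_mul_assoc, sq]
    _ = (((nn i : ℚ) - (nn (i-1) : ℚ)) • chowMk M (gp M (nn (i+1)))
        + ((nn (i+1) : ℚ) - (nn i : ℚ)) • chowMk M (gp M (nn (i-1)))
        + (((nn i : ℚ) - (nn (i-1) : ℚ)) * ((nn (i+1) : ℚ) - (nn i : ℚ))) • chowMk M S)
          * chowMk M (gp M (nn i)) := by rw [hq]
    _ = ((nn i : ℚ) - (nn (i-1) : ℚ)) • (chowMk M (gp M (nn i)) * chowMk M (gp M (nn (i+1))))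
        + ((nn (i+1) : ℚ) - (nn i : ℚ)) • (chowMk M (gp M (nn (i-1))) * chowMk M (gp M (nn i))) := by
        rw [add_mul, add_mul, smul_mul_assoc, smul_mul_assoc, smul_mul_assoc]
        have h0' : chowMk M S * chowMk M (gp M (nn i)) = 0 := by
          rw [← map_mul]; exact key
        rw [h0', smul_zero, add_zero, mul_comm (chowMk M (gp M (nn (i+1))))]


end
end

section
/- Let M be a perfect matroid design of rank r+1 on E with flat sizes n_1 < ⋯ < n_r; set n_0 = 0 and n_{r+1} = n+1, and fix a degree functional deg_M. For c = (c_1,…,c_n) ∈ ℤ_{≥0}^n with c_1+⋯+c_n = r, write A_c(M) = deg_M(γ_1^{c_1}⋯γ_n^{c_n}). If 1 ≤ i ≤ r and c_{n_i} ≥ 2, then (n_{i+1}−n_{i−1})·A_c(M) = (n_i−n_{i−1})·A_{c−e_{n_i}+e_{n_{i+1}}}(M) + (n_{i+1}−n_i)·A_{c−e_{n_i}+e_{n_{i−1}}}(M), where for i = r the term A_{c−e_{n_r}+e_{n_{r+1}}}(M) is interpreted as deg_M(γ_1^{c_1}⋯γ_n^{c_n}·γ_{n_r}^{-1}·γ_{n+1})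 = 0 (since γ_{n+1} = 0), and for i = 1 the term A_{c−e_{n_1}+e_{n_0}}(M) is interpreted as 0 (since γ_0 = 0). -/
/-!
Common setup: Chow rings of matroids, hypersimplex classes, degree functionals.
The ground set is a finite type `α`; for a matroid `M` on `α` the Chow ring
`A*(M)` is the quotient of the polynomial ring over `ℚ` on variables indexed by
the nonempty proper flats of `M` by the ideal generated by products of
incomparable variables and the linear elements `∑_{F ∋ i} x_F - ∑_{F ∋ j} x_F`.
-/

open scoped Classical

set_option maxHeartbeats 1000000
set_option synthInstance.maxHeartbeats 1000000

noncomputable section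
set_option linter.unusedSectionVars false

variable {n : ℕ}

/-- class of the variable -/
def xb (M : Matroid (Fin (n+1))) (F : ChowVar M) : ChowRing M := chowMk M (MvPolynomial.X F)

/-- linear class -/
def Lcl (M : Matroid (Fin (n+1))) (e : Fin (n+1)) : ChowRing M :=
  ∑ F : ChowVar M, if e ∈ F.1 then xb M F else 0

lemma xb_mul_incomp (M : Matroid (Fin (n+1))) (F G : ChowVar M)
    (h1 : ¬ F.1 ⊆ G.1) (h2 : ¬ G.1 ⊆ F.1) : xb M F * xb M G = 0 := by
  rw [xb, xb, ← map_mul, chowMk, Ideal.Quotient.mkₐ_eq_mk, Ideal.Quotient.eq_zero_iff_mem]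
  exact Ideal.subset_span (Or.inl ⟨F, G, h1, h2, rfl⟩)

lemma Lcl_eq (M : Matroid (Fin (n+1))) (hE : M.E = Set.univ) (e e' : Fin (n+1)) :
    Lcl M e = Lcl M e' := by
  rw [← sub_eq_zero, Lcl, Lcl, ← Finset.sum_sub_distrib]
  have : (∑ F : ChowVar M, ((if e ∈ F.1 then xb M F else 0) - (if e' ∈ F.1 then xb M F else 0)))
      = chowMk M ((∑ F : ChowVar M, if e ∈ F.1 then MvPolynomial.X F else 0)
          - (∑ F : ChowVar M, if e' ∈ F.1 then MvPolynomial.X F else 0)) := by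
    rw [map_sub, map_sum, map_sum, ← Finset.sum_sub_distrib]
    refine Finset.sum_congr rfl fun F _ => ?_
    rw [apply_ite (chowMk M), apply_ite (chowMk M), map_zero]
    rfl
  rw [this, chowMk, Ideal.Quotient.mkₐ_eq_mk, Ideal.Quotient.eq_zero_iff_mem]
  exact Ideal.subset_span (Or.inr ⟨e, by simp [hE], e', by simp [hE], rfl⟩)

lemma ncard_ground (M : Matroid (Fin (n+1))) (hE : M.E = Set.univ) : M.E.ncard = n + 1 := by
  rw [hE, Set.ncard_univ, Nat.card_eq_fintype_card, Fintype.card_fin]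

lemma gammaEq (M : Matroid (Fin (n+1))) (hE : M.E = Set.univ) (k : ℕ) (hk : k ≤ n + 1) :
    gamma M (k : ℤ) = ∑ F : ChowVar M,
      (min (F.1.card : ℚ) (k : ℚ) - (k : ℚ) * (F.1.card : ℚ) / (n + 1 : ℚ)) • xb M F := by
  have hnc := ncard_ground M hE
  rw [gamma, gammaPoly, hnc]
  by_cases h : 1 ≤ (k : ℤ) ∧ (k : ℤ) ≤ (n + 1 : ℕ) - 1
  · rw [if_pos h, map_sum]
    refine Finset.sum_congr rfl fun F _ => ?_
    rw [map_smul]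
    push_cast
    rfl
  · rw [if_neg h, map_zero]
    have hk' : k = 0 ∨ k = n + 1 := by omega
    symm
    rcases hk' with rfl | rfl
    · refine Finset.sum_eq_zero fun F _ => ?_
      have : min (F.1.card : ℚ) ((0 : ℕ) : ℚ) = 0 := by
        simp
      rw [this]
      simp
    · refine Finset.sum_eq_zero fun F _ => ?_
      have hc : (F.1.card : ℚ) ≤ ((n + 1 : ℕ) : ℚ) := by
        exact_mod_cast (Finset.card_le_univ F.1).trans (by simp)
      have : min (F.1.card : ℚ) ((n+1 : ℕ) : ℚ) = F.1.card := min_eq_left hc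
      rw [this]
      have hne : ((n:ℚ) + 1) ≠ 0 := by positivity
      push_cast
      rw [mul_comm, mul_div_assoc, div_self hne, mul_one, sub_self, zero_smul]

lemma sum_card_smul (M : Matroid (Fin (n+1))) :
    ∑ G : ChowVar M, (G.1.card : ℚ) • xb M G = ∑ e : Fin (n+1), Lcl M e := by
  simp only [Lcl]
  rw [Finset.sum_comm]
  refine Finset.sum_congr rfl fun G _ => ?_
  rw [Finset.sum_ite_mem, Finset.univ_inter, Finset.sum_const, ← Nat.cast_smul_eq_nsmul ℚ]

lemma card_le_n (M : Matroid (Fin (n+1))) (hE : M.E = Set.univ) (F : ChowVar M) :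
    F.1.card ≤ n := by
  have hne : F.1 ≠ Finset.univ := by
    intro h
    exact F.2.2.2 (by rw [h, hE]; simp)
  have := Finset.card_lt_card (Finset.ssubset_univ_iff.mpr hne)
  simpa using Nat.lt_succ_iff.mp (by simpa using this)

lemma gamma_card_mul (M : Matroid (Fin (n+1))) (hE : M.E = Set.univ) (F : ChowVar M) :
    gamma M (F.1.card : ℤ) * xb M F = 0 := by
  set k0 := F.1.card with hk0
  have hk0n : k0 ≤ n + 1 := (card_le_n M hE F).trans (Nat.le_succ n)
  have hk0pos : 1 ≤ k0 := Finset.card_pos.mpr F.2.2.1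
  have hne : ((n : ℚ) + 1) ≠ 0 := by positivity
  have hk0ne : (k0 : ℚ) ≠ 0 := by positivity
  -- step h1
  have h1 : ∑ G : ChowVar M, ((k0:ℚ) * (G.1.card : ℚ) / (n+1 : ℚ)) • xb M G
      = ∑ e ∈ F.1, Lcl M e := by
    have hall : ∀ e : Fin (n+1), Lcl M e = Lcl M 0 := fun e => Lcl_eq M hE e 0
    calc ∑ G : ChowVar M, ((k0:ℚ) * (G.1.card : ℚ) / (n+1 : ℚ)) • xb M G
        = ((k0:ℚ)/(n+1:ℚ)) • ∑ G : ChowVar M, (G.1.card : ℚ) • xb M G := by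
          rw [Finset.smul_sum]
          refine Finset.sum_congr rfl fun G _ => ?_
          rw [smul_smul]
          congr 1
          ring
      _ = ((k0:ℚ)/(n+1:ℚ)) • ∑ e : Fin (n+1), Lcl M e := by rw [sum_card_smul]
      _ = ((k0:ℚ)/(n+1:ℚ)) • (((n+1 : ℕ):ℚ) • Lcl M 0) := by
          rw [Finset.sum_congr rfl fun e _ => hall e, Finset.sum_const, Finset.card_univ,
            Fintype.card_fin, ← Nat.cast_smul_eq_nsmul ℚ]
      _ = (k0:ℚ) • Lcl M 0 := by
          rw [smul_smul]
          congr 1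
          push_cast
          field_simp
      _ = ∑ e ∈ F.1, Lcl M e := by
          rw [Finset.sum_congr rfl fun e _ => hall e, Finset.sum_const,
            ← Nat.cast_smul_eq_nsmul ℚ, hk0]
  -- step h3
  have h3 : ∑ e ∈ F.1, Lcl M e * xb M F
      = ∑ G : ChowVar M, ((F.1 ∩ G.1).card) • (xb M G * xb M F) := by
    simp only [Lcl, Finset.sum_mul, ite_mul, zero_mul]
    rw [Finset.sum_comm]
    refine Finset.sum_congr rfl fun G _ => ?_
    rw [Finset.sum_ite_mem, Finset.sum_const]
  -- combine
  rw [gammaEq M hE k0 hk0n, Finset.sum_mul]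
  have hsplit : ∀ G : ChowVar M,
      (min (G.1.card : ℚ) (k0 : ℚ) - (k0 : ℚ) * (G.1.card : ℚ) / (n + 1 : ℚ)) • xb M G * xb M F
      = (min (G.1.card : ℚ) (k0 : ℚ)) • (xb M G * xb M F)
        - ((k0 : ℚ) * (G.1.card : ℚ) / (n + 1 : ℚ)) • xb M G * xb M F := by
    intro G
    rw [sub_smul, sub_mul, smul_mul_assoc]
  rw [Finset.sum_congr rfl fun G _ => hsplit G, Finset.sum_sub_distrib,
    ← Finset.sum_mul, h1, Finset.sum_mul, h3, ← Finset.sum_sub_distrib]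
  refine Finset.sum_eq_zero fun G _ => ?_
  by_cases hGF : G.1 ⊆ F.1
  · have hmin : min (G.1.card : ℚ) (k0 : ℚ) = G.1.card :=
      min_eq_left (by exact_mod_cast Finset.card_le_card hGF)
    have hint : F.1 ∩ G.1 = G.1 := Finset.inter_eq_right.mpr hGF
    rw [hmin, hint, ← Nat.cast_smul_eq_nsmul ℚ, sub_self]
  · by_cases hFG : F.1 ⊆ G.1
    · have hmin : min (G.1.card : ℚ) (k0 : ℚ) = k0 :=
        min_eq_right (by exact_mod_cast Finset.card_le_card hFG)
      have hint : F.1 ∩ G.1 = F.1 := Finset.inter_eq_left.mpr hFG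
      rw [hmin, hint, ← hk0, ← Nat.cast_smul_eq_nsmul ℚ, sub_self]
    · rw [xb_mul_incomp M G F hGF hFG, smul_zero, smul_zero, sub_self]

lemma mrank_bdd (M : Matroid (Fin (n+1))) (S : Set (Fin (n+1))) :
    BddAbove {m | ∃ I, M.Indep I ∧ I ⊆ S ∧ I.ncard = m} := by
  refine ⟨n + 1, ?_⟩
  rintro m ⟨I, hI, hIS, rfl⟩
  exact le_trans (Set.ncard_le_ncard (Set.subset_univ I) (Set.toFinite _))
    (by simp [Set.ncard_univ])

lemma indep_card_le {r : ℕ} (M : Matroid (Fin (n+1))) (hrk : mrank M M.E = r + 1)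
    {I : Set (Fin (n+1))} (hI : M.Indep I) : I.ncard ≤ r + 1 := by
  rw [← hrk]
  exact le_csSup (mrank_bdd M M.E) ⟨I, hI, hI.subset_ground, rfl⟩

lemma flat_rank_bounds {r : ℕ} (M : Matroid (Fin (n+1))) (hE : M.E = Set.univ)
    (hM : Loopless M) (hrk : mrank M M.E = r + 1) (F : ChowVar M) :
    1 ≤ mrank M ↑F.1 ∧ mrank M ↑F.1 ≤ r := by
  obtain ⟨hF, hne, hpr⟩ := F.2
  constructor
  · obtain ⟨e, he⟩ := hne
    exact le_csSup (mrank_bdd M _) ⟨{e}, hM e (by simp [hE]), by simpa using he, by simp⟩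
  · refine csSup_le ⟨0, ⟨∅, M.empty_indep, by simp, by simp⟩⟩ ?_
    rintro m ⟨I, hI, hIF, rfl⟩
    by_contra hm
    push_neg at hm
    have hm' : I.ncard = r + 1 := le_antisymm (indep_card_le M hrk hI) hm
    obtain ⟨B, hB, hIB⟩ := hI.exists_isBase_superset
    have hBI : I = B := Set.eq_of_subset_of_ncard_le hIB
      (by rw [hm']; exact indep_card_le M hrk hB.indep) (Set.toFinite _)
    have : M.E ⊆ ↑F.1 := by
      rw [← hB.closure_eq, ← hBI]
      calc M.closure I ⊆ M.closure ↑F.1 := M.closure_subset_closure hIF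
      _ = ↑F.1 := hF.closure
    exact hpr (le_antisymm (hF.subset_ground) this)

lemma main_ring_identity {r : ℕ} (M : Matroid (Fin (n+1))) (hE : M.E = Set.univ)
    (hM : Loopless M) (hrk : mrank M M.E = r + 1)
    (nn : ℕ → ℕ) (h0 : nn 0 = 0) (htop : nn (r + 1) = n + 1)
    (hmono : ∀ i, i ≤ r → nn i < nn (i + 1))
    (hflat : ∀ F : Finset (Fin (n + 1)), M.IsFlat ↑F →
      1 ≤ mrank M ↑F → mrank M ↑F ≤ r → F.card = nn (mrank M ↑F))
    (i : ℕ) (hi1 : 1 ≤ i) (hir : i ≤ r) :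
    ((nn (i+1) : ℚ) - (nn (i-1) : ℚ)) • (gamma M (nn i) * gamma M (nn i)) =
      ((nn i : ℚ) - (nn (i-1) : ℚ)) • (gamma M (nn (i+1)) * gamma M (nn i)) +
      ((nn (i+1) : ℚ) - (nn i : ℚ)) • (gamma M (nn (i-1)) * gamma M (nn i)) := by
  have nmono : ∀ a b : ℕ, a ≤ b → b ≤ r + 1 → nn a ≤ nn b := by
    have H : ∀ b : ℕ, b ≤ r + 1 → ∀ a, a ≤ b → nn a ≤ nn b := by
      intro b
      induction b with
      | zero => intro _ a ha; have : a = 0 := by omega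
                rw [this]
      | succ k ih =>
        intro hk a ha
        rcases Nat.eq_or_lt_of_le ha with rfl | h
        · exact le_rfl
        · exact le_trans (ih (by omega) a (by omega)) (le_of_lt (hmono k (by omega)))
    exact fun a b hab hbr => H b hbr a hab
  have hb1 : nn (i-1) ≤ n + 1 := htop ▸ nmono (i-1) (r+1) (by omega) le_rfl
  have hb2 : nn i ≤ n + 1 := htop ▸ nmono i (r+1) (by omega) le_rfl
  have hb3 : nn (i+1) ≤ n + 1 := htop ▸ nmono (i+1) (r+1) (by omega) le_rfl
  have hlt1 : nn (i-1) < nn i := by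
    have := hmono (i-1) (by omega); rwa [Nat.sub_add_cancel hi1] at this
  have hlt2 : nn i < nn (i+1) := hmono i hir
  set A : ℚ := (nn (i+1) : ℚ) - (nn (i-1) : ℚ)
  set B : ℚ := (nn i : ℚ) - (nn (i-1) : ℚ)
  set C : ℚ := (nn (i+1) : ℚ) - (nn i : ℚ)
  set g : ChowRing M := gamma M (nn i) with hg
  have key : (A • gamma M ((nn i : ℕ) : ℤ) - B • gamma M ((nn (i+1) : ℕ) : ℤ)
      - C • gamma M ((nn (i-1) : ℕ) : ℤ)) * g = 0 := by
    rw [gammaEq M hE (nn i) hb2, gammaEq M hE (nn (i+1)) hb3, gammaEq M hE (nn (i-1)) hb1,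
      Finset.smul_sum, Finset.smul_sum, Finset.smul_sum, ← Finset.sum_sub_distrib,
      ← Finset.sum_sub_distrib, Finset.sum_mul]
    refine Finset.sum_eq_zero fun F _ => ?_
    rw [smul_smul, smul_smul, smul_smul, ← sub_smul, ← sub_smul, smul_mul_assoc]
    by_cases hcard : F.1.card = nn i
    · rw [hg, ← hcard, mul_comm (xb M F) (gamma M ((F.1.card : ℕ):ℤ)),
        gamma_card_mul M hE F, smul_zero]
    · -- coefficient vanishes
      have hside : F.1.card ≤ nn (i-1) ∨ nn (i+1) ≤ F.1.card := by
        obtain ⟨hj1, hj2⟩ := flat_rank_bounds M hE hM hrk F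
        have hcF : F.1.card = nn (mrank M ↑F.1) :=
          hflat F.1 F.2.1 hj1 hj2
        set j := mrank M ↑F.1
        have hji : j ≠ i := fun h => hcard (by rw [hcF, h])
        rcases lt_or_gt_of_ne hji with h | h
        · exact Or.inl (hcF ▸ nmono j (i-1) (by omega) (by omega))
        · exact Or.inr (hcF ▸ nmono (i+1) j (by omega) (by omega))
      have hnne : ((n:ℚ)+1) ≠ 0 := by positivity
      rcases hside with h | h
      · have hm1 : (F.1.card : ℚ) ≤ (nn (i-1) : ℚ) := by exact_mod_cast h
        have hm2 : (F.1.card : ℚ) ≤ (nn i : ℚ) := by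
          exact_mod_cast h.trans (le_of_lt hlt1)
        have hm3 : (F.1.card : ℚ) ≤ (nn (i+1) : ℚ) := by
          exact_mod_cast h.trans (le_of_lt (lt_trans hlt1 hlt2))
        rw [min_eq_left hm1, min_eq_left hm2, min_eq_left hm3]
        have : A - B - C = 0 := by simp only [A, B, C]; push_cast; ring
        rw [show (A * ((F.1.card:ℚ) - (nn i : ℚ) * (F.1.card:ℚ) / ((n:ℚ)+1))
          - B * ((F.1.card:ℚ) - (nn (i+1) : ℚ) * (F.1.card:ℚ) / ((n:ℚ)+1))
          - C * ((F.1.card:ℚ) - (nn (i-1) : ℚ) * (F.1.card:ℚ) / ((n:ℚ)+1))) =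
          ((A - B - C) * (F.1.card:ℚ)
            - (A * (nn i:ℚ) - B * (nn (i+1):ℚ) - C * (nn (i-1):ℚ)) * (F.1.card:ℚ) / ((n:ℚ)+1))
          from by ring]
        have h2 : A * (nn i:ℚ) - B * (nn (i+1):ℚ) - C * (nn (i-1):ℚ) = 0 := by
          simp only [A, B, C]; push_cast; ring
        rw [this, h2]
        norm_num
      · have hm1 : (nn (i-1) : ℚ) ≤ (F.1.card : ℚ) := by
          exact_mod_cast le_trans (le_of_lt (lt_trans hlt1 hlt2)) h
        have hm2 : (nn i : ℚ) ≤ (F.1.card : ℚ) := by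
          exact_mod_cast le_trans (le_of_lt hlt2) h
        have hm3 : (nn (i+1) : ℚ) ≤ (F.1.card : ℚ) := by exact_mod_cast h
        rw [min_eq_right hm1, min_eq_right hm2, min_eq_right hm3]
        have h2 : A * (nn i:ℚ) - B * (nn (i+1):ℚ) - C * (nn (i-1):ℚ) = 0 := by
          simp only [A, B, C]; push_cast; ring
        rw [show (A * ((nn i:ℚ) - (nn i : ℚ) * (F.1.card:ℚ) / ((n:ℚ)+1))
          - B * ((nn (i+1):ℚ) - (nn (i+1) : ℚ) * (F.1.card:ℚ) / ((n:ℚ)+1))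
          - C * ((nn (i-1):ℚ) - (nn (i-1) : ℚ) * (F.1.card:ℚ) / ((n:ℚ)+1))) =
          ((A * (nn i:ℚ) - B * (nn (i+1):ℚ) - C * (nn (i-1):ℚ))
            * (1 - (F.1.card:ℚ) / ((n:ℚ)+1))) from by ring]
        rw [h2, zero_mul]
        norm_num
  have key2 : A • (gamma M ((nn i : ℕ):ℤ) * g) - B • (gamma M ((nn (i+1) : ℕ):ℤ) * g)
      - C • (gamma M ((nn (i-1) : ℕ):ℤ) * g) = 0 := by
    rw [← smul_mul_assoc, ← smul_mul_assoc, ← smul_mul_assoc, ← sub_mul, ← sub_mul]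
    exact key
  rw [sub_sub] at key2
  exact sub_eq_zero.mp key2
end

noncomputable section

/-- Let `M` be a perfect matroid design of rank `r + 1` with flat
sizes `n_1 < ⋯ < n_r`, `n_0 = 0`, `n_{r+1} = n + 1`, and write
`A_c(M) = deg_M(γ_1^{c_1}⋯γ_n^{c_n})`.  If `c_{n_i} ≥ 2` for some `1 ≤ i ≤ r`, then
`(n_{i+1} - n_{i-1})·A_c(M) = (n_i - n_{i-1})·A_{c - e_{n_i} + e_{n_{i+1}}}(M) +
 (n_{i+1} - n_i)·A_{c - e_{n_i} + e_{n_{i-1}}}(M)`.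
(The exponent vectors are indexed by `0, 1, …, n+1`, with `c_0 = c_{n+1} = 0`; the
boundary interpretations for `i = 1` and `i = r` are automatic since
`γ_0 = γ_{n+1} = 0`.) -/
theorem stmt17 {n r : ℕ} (M : Matroid (Fin (n + 1))) (hE : M.E = Set.univ)
    (hM : Loopless M) (hrk : mrank M M.E = r + 1)
    (degM : ChowRing M →ₗ[ℚ] ℚ) (hdeg : IsDegreeFunctional M r degM)
    (nn : ℕ → ℕ) (h0 : nn 0 = 0) (htop : nn (r + 1) = n + 1)
    (hmono : ∀ i, i ≤ r → nn i < nn (i + 1))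
    (hflat : ∀ F : Finset (Fin (n + 1)), M.IsFlat ↑F →
      1 ≤ mrank M ↑F → mrank M ↑F ≤ r → F.card = nn (mrank M ↑F))
    (c : ℕ → ℕ) (hc0 : c 0 = 0) (hctop : c (n + 1) = 0)
    (hcsum : ∑ m ∈ Finset.Icc 1 n, c m = r)
    (i : ℕ) (hi1 : 1 ≤ i) (hir : i ≤ r) (hci : 2 ≤ c (nn i)) :
    ((nn (i + 1) : ℚ) - (nn (i - 1) : ℚ)) *
        degM (∏ m ∈ Finset.Icc 0 (n + 1), gamma M (m : ℤ) ^ c m) =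
      ((nn i : ℚ) - (nn (i - 1) : ℚ)) *
        degM (∏ m ∈ Finset.Icc 0 (n + 1), gamma M (m : ℤ) ^
          (if m = nn i then c m - 1 else if m = nn (i + 1) then c m + 1 else c m)) +
      ((nn (i + 1) : ℚ) - (nn i : ℚ)) *
        degM (∏ m ∈ Finset.Icc 0 (n + 1), gamma M (m : ℤ) ^
          (if m = nn i then c m - 1 else if m = nn (i - 1) then c m + 1 else c m)) := by
  have nmono : ∀ a b : ℕ, a ≤ b → b ≤ r + 1 → nn a ≤ nn b := by
    have H : ∀ b : ℕ, b ≤ r + 1 → ∀ a, a ≤ b → nn a ≤ nn b := by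
      intro b
      induction b with
      | zero => intro _ a ha; have : a = 0 := by omega
                rw [this]
      | succ k ih =>
        intro hk a ha
        rcases Nat.eq_or_lt_of_le ha with rfl | h
        · exact le_rfl
        · exact le_trans (ih (by omega) a (by omega)) (le_of_lt (hmono k (by omega)))
    exact fun a b hab hbr => H b hbr a hab
  set s : Finset ℕ := Finset.Icc 0 (n+1) with hs
  set a := nn i with ha'
  set b := nn (i+1) with hb'
  set b' := nn (i-1) with hb''
  have hlt1 : b' < a := by
    have := hmono (i-1) (by omega); rwa [Nat.sub_add_cancel hi1] at this
  have hlt2 : a < b := hmono i hir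
  have hale : a ≤ n + 1 := htop ▸ nmono i (r+1) (by omega) le_rfl
  have hble : b ≤ n + 1 := htop ▸ nmono (i+1) (r+1) (by omega) le_rfl
  have ha : a ∈ s := by simp [hs]; omega
  have hb : b ∈ s := by simp [hs]; omega
  have hb2 : b' ∈ s := by simp [hs]; omega
  have hab : b ≠ a := by omega
  have hab' : b' ≠ a := by omega
  set Q : ChowRing M := gamma M (a : ℤ) ^ (c a - 2) * ∏ m ∈ s.erase a, gamma M (m : ℤ) ^ c m
    with hQ
  have hP : ∏ m ∈ s, gamma M (m : ℤ) ^ c m = gamma M (a:ℤ) * gamma M (a:ℤ) * Q := by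
    rw [← Finset.mul_prod_erase s _ ha, hQ]
    have hca : gamma M (a:ℤ) ^ c a
        = gamma M (a:ℤ) * gamma M (a:ℤ) * gamma M (a:ℤ) ^ (c a - 2) := by
      conv_lhs => rw [show c a = 2 + (c a - 2) from (Nat.add_sub_cancel' hci).symm]
      rw [pow_add, pow_two]
    rw [hca]
    ring
  have hP1 : ∏ m ∈ s, gamma M (m : ℤ) ^
        (if m = nn i then c m - 1 else if m = nn (i + 1) then c m + 1 else c m)
      = gamma M (b:ℤ) * gamma M (a:ℤ) * Q := by
    rw [← Finset.mul_prod_erase s _ ha,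
      ← Finset.mul_prod_erase (s.erase a) _ (Finset.mem_erase.mpr ⟨hab, hb⟩), hQ,
      ← Finset.mul_prod_erase (s.erase a) _ (Finset.mem_erase.mpr ⟨hab, hb⟩)]
    rw [if_pos rfl, if_neg hab, if_pos rfl]
    have hcongr : ∀ m ∈ (s.erase a).erase b,
        gamma M (m : ℤ) ^ (if m = nn i then c m - 1 else if m = nn (i + 1) then c m + 1 else c m)
        = gamma M (m : ℤ) ^ c m := by
      intro m hm
      obtain ⟨hmb, hma, _⟩ := by
        simpa [Finset.mem_erase] using hm
      rw [if_neg hma, if_neg hmb]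
    rw [Finset.prod_congr rfl hcongr]
    rw [show c a - 1 = 1 + (c a - 2) by omega, pow_add, pow_add, pow_one]
    ring
  have hP2 : ∏ m ∈ s, gamma M (m : ℤ) ^
        (if m = nn i then c m - 1 else if m = nn (i - 1) then c m + 1 else c m)
      = gamma M (b':ℤ) * gamma M (a:ℤ) * Q := by
    rw [← Finset.mul_prod_erase s _ ha,
      ← Finset.mul_prod_erase (s.erase a) _ (Finset.mem_erase.mpr ⟨hab', hb2⟩), hQ,
      ← Finset.mul_prod_erase (s.erase a) _ (Finset.mem_erase.mpr ⟨hab', hb2⟩)]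
    rw [if_pos rfl, if_neg hab', if_pos rfl]
    have hcongr : ∀ m ∈ (s.erase a).erase b',
        gamma M (m : ℤ) ^ (if m = nn i then c m - 1 else if m = nn (i - 1) then c m + 1 else c m)
        = gamma M (m : ℤ) ^ c m := by
      intro m hm
      obtain ⟨hmb, hma, _⟩ := by
        simpa [Finset.mem_erase] using hm
      rw [if_neg hma, if_neg hmb]
    rw [Finset.prod_congr rfl hcongr]
    rw [show c a - 1 = 1 + (c a - 2) by omega, pow_add, pow_add, pow_one]
    ring
  have hmain := main_ring_identity M hE hM hrk nn h0 htop hmono hflat i hi1 hir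
  have hmul := congrArg (· * Q) hmain
  simp only [add_mul, smul_mul_assoc] at hmul
  have := congrArg degM hmul
  rw [map_add, map_smul, map_smul, map_smul] at this
  rw [hP, hP1, hP2]
  simpa [smul_eq_mul] using this
end
end
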